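/- arXiv:math/9905134 — 6 statements merged into one kernel-verified Lean document; each statement's English description precedes it below -/
import Mathlib

section
/- (Lemma 2 and its Corollary) Let Ω ⊆ (ℂ∖{0})^N be open and connected and let v(β,a) be an analytic solution of equation (GG2) on V × Ω such that v(β,a) ≠ 0 for all (β,a). Then for each i = 1, …, N and each fixed β ∈ V, each of the functions φ(a) = (∂v/∂a_i)(β,a) / v(β − ω^i, a) and ψ(a) = v(β,a) / (a_i · v(β − ω^i, a)) satisfies Σ_{k=1}^N a_k (∂φ/∂a_k)(a) ω^k = 0. Consequently (Corollary), with L = {ℓ ∈ ℂ^N : Σ_j ℓ_j ω^j = 0} and a fixed basis l^1,…,l^r of L (r = N − n), these functions can locally be written as φ_i(β, x(a)) and ψ_i(β, x(a)) respectively, where x(a) = (a^{l^1}, …, a^{l^r}) and a^{l} = a_1^{l_1}⋯a_N^{l_N}. -/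
/-!
Write `E f = ∑ₖ aₖ (∂f/∂aₖ) ωᵏ`, so that (GG2) says `E v(β,·) = v(β,·) β`: the function
`v(β,·)` has weight `β`. Since `E` is a derivation, weights add under products and subtract
under quotients; the coordinate `aᵢ` has weight `ωⁱ`, and the commutation relation
`∂ᵢ (E f) = E (∂ᵢ f) + (∂ᵢ f) ωⁱ` gives `∂ᵢ v(β,·)` the weight `β - ωⁱ`. Hence `φ` and `ψ`
have weight `0`.

If `E φ = 0` then the vector `(aₖ ∂ₖφ)ₖ` lies in `L = ker π`, so in logarithmic coordinates
`a = a₀ exp z` the function `φ` is constant along every direction annihilating `L`. On a small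
convex chart the exponents `l ⬝ z` of the monomials `a^l` vary by less than `2π`, so two points
with the same monomials differ by such a direction.
-/

open Complex Filter Topology Set

theorem AnalyticOnNhd.fderiv_apply {E F : Type*} [NormedAddCommGroup E] [NormedSpace ℂ E]
    [NormedAddCommGroup F] [NormedSpace ℂ F] [CompleteSpace F] {f : E → F} {s : Set E}
    (hf : AnalyticOnNhd ℂ f s) (u : E) : AnalyticOnNhd ℂ (fun x => fderiv ℂ f x u) s :=
  fun x hx => ((ContinuousLinearMap.apply ℂ F u).analyticAt _).fun_comp (hf.fderiv x hx)

section LogChart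

variable {N : ℕ}

theorem Complex.eq_of_exp_eq_of_norm_sub_lt {z w : ℂ} (h : exp z = exp w)
    (hzw : ‖z - w‖ < 2 * Real.pi) : z = w := by
  obtain ⟨n, rfl⟩ := exp_eq_exp_iff_exists_int.1 h
  have : |(n : ℝ)| * (2 * Real.pi) < 1 * (2 * Real.pi) := by
    simpa [norm_mul, abs_of_pos Real.pi_pos] using hzw
  have hn : |n| < 1 := by exact_mod_cast lt_of_mul_lt_mul_right this (by positivity)
  obtain rfl : n = 0 := by rw [abs_lt] at hn; omega
  simp

theorem dotProduct_eq_zero_of_mem_span {ι : Type*} {l : ι → Fin N → ℂ} {d : Fin N → ℂ}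
    (hd : ∀ k, l k ⬝ᵥ d = 0) {u : Fin N → ℂ} (hu : u ∈ Submodule.span ℂ (range l)) :
    u ⬝ᵥ d = 0 := by
  induction hu using Submodule.span_induction with
  | mem _ h => obtain ⟨k, rfl⟩ := h; exact hd k
  | zero => simp
  | add _ _ _ _ h₁ h₂ => simp [add_dotProduct, h₁, h₂]
  | smul _ _ _ h => simp [smul_dotProduct, h]

noncomputable def mulExp (a₀ z : Fin N → ℂ) : Fin N → ℂ := fun j => a₀ j * exp (z j)

noncomputable def logDiv (a₀ x : Fin N → ℂ) : Fin N → ℂ := fun j => log (x j / a₀ j)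

theorem continuous_mulExp (a₀ : Fin N → ℂ) : Continuous (mulExp a₀) := by
  unfold mulExp; fun_prop

theorem mulExp_zero (a₀ : Fin N → ℂ) : mulExp a₀ 0 = a₀ := by
  funext j
  simp [mulExp]

theorem logDiv_self {a₀ : Fin N → ℂ} (ha₀ : ∀ j, a₀ j ≠ 0) : logDiv a₀ a₀ = 0 := by
  funext j
  simp [logDiv, div_self (ha₀ j)]

theorem mulExp_logDiv {a₀ x : Fin N → ℂ} (ha₀ : ∀ j, a₀ j ≠ 0) (hx : ∀ j, x j ≠ 0) :
    mulExp a₀ (logDiv a₀ x) = x := by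
  funext j
  simp [mulExp, logDiv, exp_log (div_ne_zero (hx j) (ha₀ j)), mul_div_cancel₀ _ (ha₀ j)]

theorem hasDerivAt_mulExp_add_smul (a₀ z d : Fin N → ℂ) (s : ℝ) :
    HasDerivAt (fun s : ℝ => mulExp a₀ (z + s • d)) (mulExp a₀ (z + s • d) * d) s := by
  rw [hasDerivAt_pi]
  intro j
  have := (((hasDerivAt_id s).smul_const (d j)).const_add (z j)).cexp.const_mul (a₀ j)
  simpa [mulExp, mul_assoc] using this

/-- The bound `2π` makes the exponents `l k ⬝ᵥ w` on `U` recoverable from the monomials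
`exp (l k ⬝ᵥ w)`. -/
theorem exists_convex_nhds_zero_mulExp_mem {r : ℕ} (l : Fin r → Fin N → ℂ)
    {Ω : Set (Fin N → ℂ)} (hΩ : IsOpen Ω) {a₀ : Fin N → ℂ} (ha₀ : a₀ ∈ Ω) :
    ∃ U : Set (Fin N → ℂ), Convex ℝ U ∧ IsOpen U ∧ 0 ∈ U ∧ (∀ w ∈ U, mulExp a₀ w ∈ Ω) ∧
      ∀ w ∈ U, ∀ w' ∈ U, ∀ k, ‖l k ⬝ᵥ (w' - w)‖ < 2 * Real.pi := by
  obtain ⟨ε, hε, hεΩ⟩ : ∃ ε > 0, Metric.ball 0 ε ⊆ mulExp a₀ ⁻¹' Ω :=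
    Metric.isOpen_iff.1 (hΩ.preimage (continuous_mulExp a₀)) 0 (by rwa [mem_preimage, mulExp_zero])
  obtain ⟨η, hη, hηl⟩ : ∃ η > 0,
      Metric.ball 0 η ⊆ (fun w k => l k ⬝ᵥ w) ⁻¹' Metric.ball 0 (2 * Real.pi) :=
    Metric.isOpen_iff.1 (Metric.isOpen_ball.preimage (by fun_prop)) 0
      (by simpa [← Pi.zero_def] using Real.two_pi_pos)
  refine ⟨Metric.ball 0 (min ε (η / 2)), convex_ball _ _, Metric.isOpen_ball,
    Metric.mem_ball_self (by positivity),
    fun w hw => hεΩ (Metric.ball_subset_ball (min_le_left _ _) hw), fun w hw w' hw' k => ?_⟩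
  rw [mem_ball_zero_iff] at hw hw'
  have hdist : w' - w ∈ Metric.ball 0 η := by
    rw [mem_ball_zero_iff]
    calc ‖w' - w‖ ≤ ‖w'‖ + ‖w‖ := norm_sub_le _ _
      _ < η / 2 + η / 2 :=
        add_lt_add (hw'.trans_le (min_le_right _ _)) (hw.trans_le (min_le_right _ _))
      _ = η := add_halves η
  exact (norm_le_pi_norm _ k).trans_lt (mem_ball_zero_iff.1 (hηl hdist))

theorem map_mul_eq_zero_of_sum_smul_eq_zero {V : Type*} [AddCommGroup V] [Module ℂ V]
    {ω : Fin N → V} (π : (Fin N → ℂ) →ₗ[ℂ] V) (hπ : ∀ j, π (Pi.single j 1) = ω j)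
    {F : Type*} [FunLike F (Fin N → ℂ) ℂ] [LinearMapClass F ℂ (Fin N → ℂ) ℂ] (L : F)
    {x d : Fin N → ℂ} (hL : ∑ k, (x k * L (Pi.single k 1)) • ω k = 0)
    (hd : ∀ u ∈ LinearMap.ker π, u ⬝ᵥ d = 0) :
    L (x * d) = 0 := by
  classical
  set c : Fin N → ℂ := fun k => x k * L (Pi.single k 1)
  have hc : c ∈ LinearMap.ker π := by
    rw [LinearMap.mem_ker, pi_eq_sum_univ' c, map_sum]
    simpa only [map_smul, hπ] using hL
  calc L (x * d) = c ⬝ᵥ d := by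
        rw [pi_eq_sum_univ' (x * d), map_sum]
        simp only [map_smul, smul_eq_mul, dotProduct, Pi.mul_apply, c]
        exact Finset.sum_congr rfl fun k _ => by ring
    _ = 0 := hd c hc

end LogChart

section EulerField

variable {V : Type*} [NormedAddCommGroup V] [NormedSpace ℂ V] {N : ℕ}

/-- The left-hand side of (GG2). -/
noncomputable def eulerField (ω : Fin N → V) (f : (Fin N → ℂ) → ℂ) (a : Fin N → ℂ) : V :=
  ∑ k, (a k * fderiv ℂ f a (Pi.single k 1)) • ω k

variable {ω : Fin N → V} {f g : (Fin N → ℂ) → ℂ} {a : Fin N → ℂ}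

theorem Filter.EventuallyEq.eulerField_eq (h : f =ᶠ[𝓝 a] g) :
    eulerField ω f a = eulerField ω g a := by
  simp only [eulerField, h.fderiv_eq]

theorem eulerField_coord (i : Fin N) : eulerField ω (fun x => x i) a = a i • ω i := by
  simp [eulerField, (hasFDerivAt_apply i a).fderiv, Pi.single_apply]

theorem eulerField_mul (hf : DifferentiableAt ℂ f a) (hg : DifferentiableAt ℂ g a) :
    eulerField ω (fun x => f x * g x) a = f a • eulerField ω g a + g a • eulerField ω f a := by
  simp only [eulerField, fderiv_fun_mul hf hg, Finset.smul_sum, ← Finset.sum_add_distrib]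
  refine Finset.sum_congr rfl fun k _ => ?_
  simp only [FunLike.coe_add, Pi.add_apply, FunLike.coe_smul, Pi.smul_apply, smul_eq_mul,
    smul_smul, ← add_smul]
  ring_nf

theorem eulerField_mul_of_eq_smul {γ δ : V} (hf : DifferentiableAt ℂ f a)
    (hg : DifferentiableAt ℂ g a) (hEf : eulerField ω f a = f a • γ)
    (hEg : eulerField ω g a = g a • δ) :
    eulerField ω (fun x => f x * g x) a = (f a * g a) • (γ + δ) := by
  rw [eulerField_mul hf hg, hEf, hEg, smul_add, smul_smul, smul_smul, mul_comm (g a), add_comm]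

theorem eulerField_div_of_eq_smul {γ δ : V} (hf : DifferentiableAt ℂ f a)
    (hg : DifferentiableAt ℂ g a) (hga : g a ≠ 0) (hEf : eulerField ω f a = f a • γ)
    (hEg : eulerField ω g a = g a • δ) :
    eulerField ω (fun x => f x / g x) a = (f a / g a) • (γ - δ) := by
  have hdiv : DifferentiableAt ℂ (fun x => f x / g x) a := by
    simpa only [div_eq_mul_inv] using hf.fun_mul (hg.fun_inv hga)
  have hfg : f =ᶠ[𝓝 a] fun x => f x / g x * g x := by
    filter_upwards [hg.continuousAt.eventually_ne hga] with x hx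
    rw [div_mul_cancel₀ _ hx]
  have hLeibniz := hfg.eulerField_eq (ω := ω)
  rw [eulerField_mul hdiv hg, hEf, hEg] at hLeibniz
  have hexpected : f a • γ = (f a / g a) • (g a • δ) + g a • ((f a / g a) • (γ - δ)) := by
    rw [smul_smul, smul_smul, div_mul_cancel₀ _ hga, mul_div_cancel₀ _ hga, smul_sub,
      add_sub_cancel]
  exact smul_right_injective V hga (add_left_cancel (hLeibniz.symm.trans hexpected))

theorem fderiv_eulerField_apply_single (hf : ContDiffAt ℂ 2 f a) (i : Fin N) :
    fderiv ℂ (eulerField ω f) a (Pi.single i 1) =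
      eulerField ω (fun x => fderiv ℂ f x (Pi.single i 1)) a
        + fderiv ℂ f a (Pi.single i 1) • ω i := by
  set D2 := fderiv ℂ (fderiv ℂ f) a
  have hD : DifferentiableAt ℂ (fderiv ℂ f) a :=
    (hf.fderiv_right (m := 1) le_rfl).differentiableAt one_ne_zero
  have hpartial : ∀ k, HasFDerivAt (fun x => fderiv ℂ f x (Pi.single k 1))
      (D2.flip (Pi.single k 1)) a := fun k => by
    simpa using hD.hasFDerivAt.clm_apply (hasFDerivAt_const (Pi.single k 1) a)
  have hsymm := hf.isSymmSndFDerivAt (by simp)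
  have hE : HasFDerivAt (eulerField ω f)
      (∑ k, (a k • D2.flip (Pi.single k 1)
        + fderiv ℂ f a (Pi.single k 1) • ContinuousLinearMap.proj k).smulRight (ω k)) a :=
    HasFDerivAt.fun_sum fun k _ => ((hasFDerivAt_apply k a).mul (hpartial k)).smul_const (ω k)
  rw [hE.fderiv]
  simp only [eulerField, (hpartial i).fderiv, sum_apply, ContinuousLinearMap.smulRight_apply,
    add_apply, smul_apply, ContinuousLinearMap.flip_apply, smul_eq_mul,
    ContinuousLinearMap.proj_apply, Pi.single_apply, mul_ite, mul_one, mul_zero, add_smul,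
    ite_smul, zero_smul, Finset.sum_add_distrib, Finset.sum_ite_eq', Finset.mem_univ,
    ↓reduceIte, add_left_inj]
  exact Finset.sum_congr rfl fun k _ => by rw [hsymm]

theorem eulerField_fderiv_apply_single_of_eventuallyEq {β : V} (hf : ContDiffAt ℂ 2 f a)
    (hE : eulerField ω f =ᶠ[𝓝 a] fun x => f x • β) (i : Fin N) :
    eulerField ω (fun x => fderiv ℂ f x (Pi.single i 1)) a
      = fderiv ℂ f a (Pi.single i 1) • (β - ω i) := by
  have h := fderiv_eulerField_apply_single (ω := ω) hf i
  rw [hE.fderiv_eq, fderiv_smul_const (hf.differentiableAt two_ne_zero) β,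
    ContinuousLinearMap.smulRight_apply] at h
  rw [smul_sub, eq_sub_iff_add_eq, h]

section GG2

variable {v : V → (Fin N → ℂ) → ℂ} {Ω : Set (Fin N → ℂ)}

theorem eulerField_fderiv_div_eq_zero (hΩ : IsOpen Ω) (hv : ∀ β, AnalyticOnNhd ℂ (v β) Ω)
    (hvne : ∀ β, ∀ a ∈ Ω, v β a ≠ 0) (hGG2 : ∀ β, ∀ a ∈ Ω, eulerField ω (v β) a = v β a • β)
    (i : Fin N) (β : V) (ha : a ∈ Ω) :
    eulerField ω (fun x => fderiv ℂ (v β) x (Pi.single i 1) / v (β - ω i) x) a = 0 := by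
  have hpartial := eulerField_fderiv_apply_single_of_eventuallyEq (hv β a ha).contDiffAt
    (eventually_of_mem (hΩ.mem_nhds ha) (hGG2 β)) i
  simpa using eulerField_div_of_eq_smul ((hv β).fderiv_apply _ a ha).differentiableAt
    (hv _ a ha).differentiableAt (hvne _ a ha) hpartial (hGG2 (β - ω i) a ha)

theorem eulerField_div_coord_mul_eq_zero (hv : ∀ β, AnalyticOnNhd ℂ (v β) Ω)
    (hvne : ∀ β, ∀ a ∈ Ω, v β a ≠ 0) (hΩ0 : ∀ a ∈ Ω, ∀ j, a j ≠ 0)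
    (hGG2 : ∀ β, ∀ a ∈ Ω, eulerField ω (v β) a = v β a • β) (i : Fin N) (β : V) (ha : a ∈ Ω) :
    eulerField ω (fun x => v β x / (x i * v (β - ω i) x)) a = 0 := by
  have hcoord : DifferentiableAt ℂ (fun x : Fin N → ℂ => x i) a :=
    (hasFDerivAt_apply i a).differentiableAt
  have hden : eulerField ω (fun x => x i * v (β - ω i) x) a = (a i * v (β - ω i) a) • β := by
    simpa using eulerField_mul_of_eq_smul hcoord (hv _ a ha).differentiableAt
      (eulerField_coord i) (hGG2 (β - ω i) a ha)
  simpa using eulerField_div_of_eq_smul (hv β a ha).differentiableAt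
    (hcoord.fun_mul (hv _ a ha).differentiableAt) (mul_ne_zero (hΩ0 a ha i) (hvne _ a ha))
    (hGG2 β a ha) hden

end GG2

theorem eq_of_eulerField_eq_zero (π : (Fin N → ℂ) →ₗ[ℂ] V) (hπ : ∀ j, π (Pi.single j 1) = ω j)
    {φ : (Fin N → ℂ) → ℂ} {Ω : Set (Fin N → ℂ)} (hφ : ∀ x ∈ Ω, DifferentiableAt ℂ φ x)
    (hE : ∀ x ∈ Ω, eulerField ω φ x = 0) {a₀ : Fin N → ℂ} {U : Set (Fin N → ℂ)}
    (hU : Convex ℝ U) (hUΩ : ∀ z ∈ U, mulExp a₀ z ∈ Ω) {z z' : Fin N → ℂ} (hz : z ∈ U)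
    (hz' : z' ∈ U) (hd : ∀ u ∈ LinearMap.ker π, u ⬝ᵥ (z' - z) = 0) :
    φ (mulExp a₀ z') = φ (mulExp a₀ z) := by
  set P := fun s : ℝ => mulExp a₀ (z + s • (z' - z))
  have hPΩ : ∀ s ∈ Icc (0 : ℝ) 1, P s ∈ Ω := fun s hs => hUΩ _ (hU.add_smul_sub_mem hz hz' hs)
  have hderiv : ∀ s ∈ Icc (0 : ℝ) 1, HasDerivAt (φ ∘ P) 0 s := by
    intro s hs
    have := ((hφ _ (hPΩ s hs)).hasFDerivAt.restrictScalars ℝ).comp_hasDerivAt s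
      (hasDerivAt_mulExp_add_smul a₀ z (z' - z) s)
    rwa [ContinuousLinearMap.coe_restrictScalars',
      map_mul_eq_zero_of_sum_smul_eq_zero π hπ _ (hE _ (hPΩ s hs)) hd] at this
  have := constant_of_has_deriv_right_zero
    (fun s hs => (hderiv s hs).continuousAt.continuousWithinAt)
    (fun s hs => (hderiv s (Ico_subset_Icc_self hs)).hasDerivWithinAt) 1
    (right_mem_Icc.2 zero_le_one)
  simpa [P] using this

theorem exists_log_chart {r : ℕ} (π : (Fin N → ℂ) →ₗ[ℂ] V) (hπ : ∀ j, π (Pi.single j 1) = ω j)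
    (l : Fin r → Fin N → ℂ) (hlspan : Submodule.span ℂ (range l) = LinearMap.ker π)
    {Ω : Set (Fin N → ℂ)} (hΩ : IsOpen Ω) {a₀ : Fin N → ℂ} (ha₀ : a₀ ∈ Ω)
    (ha₀0 : ∀ j, a₀ j ≠ 0) :
    ∃ Ω' ⊆ Ω, IsOpen Ω' ∧ a₀ ∈ Ω' ∧ ∃ Log : Fin N → (Fin N → ℂ) → ℂ,
      (∀ j, AnalyticOnNhd ℂ (Log j) Ω') ∧ (∀ j, ∀ a ∈ Ω', exp (Log j a) = a j) ∧
      ∀ φ : (Fin N → ℂ) → ℂ, (∀ x ∈ Ω, DifferentiableAt ℂ φ x) →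
        (∀ x ∈ Ω, eulerField ω φ x = 0) → ∀ a ∈ Ω', ∀ a' ∈ Ω',
          (∀ k, exp (∑ j, l k j * Log j a) = exp (∑ j, l k j * Log j a')) → φ a = φ a' := by
  obtain ⟨U, hU, hUopen, hU0, hUΩ, hUl⟩ := exists_convex_nhds_zero_mulExp_mem l hΩ ha₀
  let S := ⋂ j, (fun x : Fin N → ℂ => x j / a₀ j) ⁻¹' slitPlane
  have hS : IsOpen S := isOpen_iInter_of_finite fun j => isOpen_slitPlane.preimage (by fun_prop)
  have hlogDiv : ∀ x ∈ S, ∀ j, AnalyticAt ℂ (fun y => logDiv a₀ y j) x := by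
    intro x hx j
    have h1 : AnalyticAt ℂ (fun y : Fin N → ℂ => y j / a₀ j) x :=
      ((ContinuousLinearMap.proj j : (Fin N → ℂ) →L[ℂ] ℂ).analyticAt x).div_const
    have h2 : x j / a₀ j ∈ slitPlane := mem_iInter.1 hx j
    exact h1.clog h2
  have hmulExp : ∀ x ∈ S, mulExp a₀ (logDiv a₀ x) = x := fun x hx =>
    mulExp_logDiv ha₀0 fun j => (div_ne_zero_iff.1 (slitPlane_ne_zero (mem_iInter.1 hx j))).1
  refine ⟨S ∩ logDiv a₀ ⁻¹' U, fun x hx => hmulExp x hx.1 ▸ hUΩ _ hx.2, ?_, ⟨?_, ?_⟩,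
    fun j x => log (a₀ j) + logDiv a₀ x j, fun j x hx => analyticAt_const.add (hlogDiv x hx.1 j),
    fun j x hx => ?_, ?_⟩
  · exact ContinuousOn.isOpen_inter_preimage (fun x hx => (continuousAt_pi.2 fun j =>
      (hlogDiv x hx j).continuousAt).continuousWithinAt) hS hUopen
  · exact mem_iInter.2 fun j => by simp [div_self (ha₀0 j)]
  · rwa [mem_preimage, logDiv_self ha₀0]
  · rw [exp_add, exp_log (ha₀0 j)]
    exact congrFun (hmulExp x hx.1) j
  intro φ hφ hE a ha a' ha' hmon
  have hl : ∀ k, l k ⬝ᵥ (logDiv a₀ a' - logDiv a₀ a) = 0 := by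
    intro k
    have hsub : (∑ j, l k j * (log (a₀ j) + logDiv a₀ a' j))
        - ∑ j, l k j * (log (a₀ j) + logDiv a₀ a j) = l k ⬝ᵥ (logDiv a₀ a' - logDiv a₀ a) := by
      simp only [dotProduct, ← Finset.sum_sub_distrib, Pi.sub_apply]
      exact Finset.sum_congr rfl fun j _ => by ring
    rw [← hsub, sub_eq_zero]
    exact Complex.eq_of_exp_eq_of_norm_sub_lt (hmon k).symm (hsub ▸ hUl _ ha.2 _ ha'.2 k)
  have hd : ∀ u ∈ LinearMap.ker π, u ⬝ᵥ (logDiv a₀ a' - logDiv a₀ a) = 0 := fun u hu =>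
    dotProduct_eq_zero_of_mem_span hl (hlspan ▸ hu)
  rw [← hmulExp a ha.1, ← hmulExp a' ha'.1]
  exact (eq_of_eulerField_eq_zero π hπ hφ hE hU hUΩ ha.2 ha'.2 hd).symm

end EulerField

theorem exists_eq_comp_of_forall_eq {α β γ : Type*} [Nonempty γ] {S : Set α} {g : α → β}
    {F : α → γ} (h : ∀ a ∈ S, ∀ a' ∈ S, g a = g a' → F a = F a') :
    ∃ Φ : β → γ, ∀ a ∈ S, F a = Φ (g a) := by
  classical
  have hfac : Function.FactorsThrough (fun a : S => F a) (fun a : S => g a) :=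
    fun a a' haa => h _ a.2 _ a'.2 haa
  exact ⟨Function.extend (fun a : S => g a) (fun a : S => F a) fun _ => Classical.arbitrary γ,
    fun a ha => (hfac.extend_apply _ ⟨a, ha⟩).symm⟩

theorem stmt6_general {V : Type*} [NormedAddCommGroup V] [NormedSpace ℂ V]
    {N r : ℕ} (ω : Fin N → V)
    (π : (Fin N → ℂ) →ₗ[ℂ] V) (hπ : ∀ j, π (Pi.single j 1) = ω j)
    (l : Fin r → Fin N → ℂ)
    (hlspan : Submodule.span ℂ (Set.range l) = LinearMap.ker π)
    (Ω : Set (Fin N → ℂ)) (hΩopen : IsOpen Ω)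
    (hΩ0 : ∀ a ∈ Ω, ∀ j, a j ≠ 0)
    (v : V → (Fin N → ℂ) → ℂ)
    (hv : AnalyticOnNhd ℂ (fun p : V × (Fin N → ℂ) => v p.1 p.2) (Set.univ ×ˢ Ω))
    (hvne : ∀ (β : V), ∀ a ∈ Ω, v β a ≠ 0)
    (hvGG2 : ∀ (β : V), ∀ a ∈ Ω,
      ∑ j, (a j * fderiv ℂ (v β) a (Pi.single j 1)) • ω j = v β a • β) :
    (∀ (i : Fin N) (β : V), ∀ a ∈ Ω,
      ∑ k, (a k * fderiv ℂ
          (fun a' => fderiv ℂ (v β) a' (Pi.single i 1) / v (β - ω i) a') a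
          (Pi.single k 1)) • ω k = 0) ∧
    (∀ (i : Fin N) (β : V), ∀ a ∈ Ω,
      ∑ k, (a k * fderiv ℂ
          (fun a' => v β a' / (a' i * v (β - ω i) a')) a
          (Pi.single k 1)) • ω k = 0) ∧
    (∀ a0 ∈ Ω, ∃ Ω' ⊆ Ω, IsOpen Ω' ∧ a0 ∈ Ω' ∧
      ∃ Log : Fin N → (Fin N → ℂ) → ℂ,
        (∀ j, AnalyticOnNhd ℂ (Log j) Ω') ∧
        (∀ j, ∀ a ∈ Ω', Complex.exp (Log j a) = a j) ∧
        ∃ Φ Ψ : Fin N → V → (Fin r → ℂ) → ℂ,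
          ∀ (i : Fin N) (β : V), ∀ a ∈ Ω',
            fderiv ℂ (v β) a (Pi.single i 1) / v (β - ω i) a
              = Φ i β (fun k => Complex.exp (∑ j, l k j * Log j a)) ∧
            v β a / (a i * v (β - ω i) a)
              = Ψ i β (fun k => Complex.exp (∑ j, l k j * Log j a))) := by
  have hvβ : ∀ β, AnalyticOnNhd ℂ (v β) Ω := fun β a ha =>
    (hv (β, a) ⟨mem_univ β, ha⟩).comp (analyticAt_const.prod analyticAt_id)
  have hφ := fun i β a (ha : a ∈ Ω) =>
    eulerField_fderiv_div_eq_zero hΩopen hvβ hvne hvGG2 i β ha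
  have hψ := fun i β a (ha : a ∈ Ω) => eulerField_div_coord_mul_eq_zero hvβ hvne hΩ0 hvGG2 i β ha
  refine ⟨hφ, hψ, fun a₀ ha₀ => ?_⟩
  obtain ⟨Ω', hΩ'Ω, hΩ'open, ha₀', Log, hLog, hexp, hfibre⟩ :=
    exists_log_chart π hπ l hlspan hΩopen ha₀ (hΩ0 a₀ ha₀)
  have hfactor := fun F hF hEF => exists_eq_comp_of_forall_eq (S := Ω')
    (g := fun a k => exp (∑ j, l k j * Log j a)) (F := F)
    fun a ha a' ha' h => hfibre F hF hEF a ha a' ha' (congrFun h)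
  choose Φ hΦ using fun i β => hfactor _ (fun a ha =>
    (((hvβ β).fderiv_apply _ a ha).fun_div (hvβ _ a ha) (hvne _ a ha)).differentiableAt)
    (hφ i β)
  choose Ψ hΨ using fun i β => hfactor _ (fun a ha =>
    ((hvβ β a ha).fun_div (((ContinuousLinearMap.proj i).analyticAt a).fun_mul (hvβ _ a ha))
      (mul_ne_zero (hΩ0 a ha i) (hvne _ a ha))).differentiableAt) (hψ i β)
  exact ⟨Ω', hΩ'Ω, hΩ'open, ha₀', Log, hLog, hexp, Φ, Ψ,
    fun i β a ha => ⟨hΦ i β a ha, hΨ i β a ha⟩⟩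

/-- Lemma 2 and its Corollary: if `v(β,a)` is an analytic nowhere-vanishing solution of
(GG2) on `V × Ω` (`Ω ⊆ (ℂ∖{0})^N` open connected), then for each `i` and each fixed `β` the
functions `φ(a) = (∂v/∂a_i)(β,a)/v(β-ω^i,a)` and `ψ(a) = v(β,a)/(a_i v(β-ω^i,a))` satisfy
`∑_k a_k (∂φ/∂a_k) • ω^k = 0`; consequently, near any point of `Ω` they can be written as
`φ_i(β, x(a))` and `ψ_i(β, x(a))` where `x(a) = (a^{l^1},…,a^{l^r})` for a fixed basis
`l^1,…,l^r` of `L = {ℓ : ∑_j ℓ_j ω^j = 0}` (branches taken via analytic logarithms). -/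
theorem stmt6 {V : Type*} [NormedAddCommGroup V] [NormedSpace ℂ V] [FiniteDimensional ℂ V]
    {N r : ℕ} (ω : Fin N → V)
    (hspan : Submodule.span ℂ (Set.range ω) = ⊤)
    (hr : r = N - Module.finrank ℂ V)
    (π : (Fin N → ℂ) →ₗ[ℂ] V) (hπ : ∀ j, π (Pi.single j 1) = ω j)
    (l : Fin r → Fin N → ℂ)
    (hlind : LinearIndependent ℂ l)
    (hlspan : Submodule.span ℂ (Set.range l) = LinearMap.ker π)
    (Ω : Set (Fin N → ℂ)) (hΩopen : IsOpen Ω) (hΩconn : IsConnected Ω)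
    (hΩ0 : ∀ a ∈ Ω, ∀ j, a j ≠ 0)
    (v : V → (Fin N → ℂ) → ℂ)
    (hv : AnalyticOnNhd ℂ (fun p : V × (Fin N → ℂ) => v p.1 p.2) (Set.univ ×ˢ Ω))
    (hvne : ∀ (β : V), ∀ a ∈ Ω, v β a ≠ 0)
    (hvGG2 : ∀ (β : V), ∀ a ∈ Ω,
      ∑ j, (a j * fderiv ℂ (v β) a (Pi.single j 1)) • ω j = v β a • β) :
    (∀ (i : Fin N) (β : V), ∀ a ∈ Ω,
      ∑ k, (a k * fderiv ℂ
          (fun a' => fderiv ℂ (v β) a' (Pi.single i 1) / v (β - ω i) a') a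
          (Pi.single k 1)) • ω k = 0) ∧
    (∀ (i : Fin N) (β : V), ∀ a ∈ Ω,
      ∑ k, (a k * fderiv ℂ
          (fun a' => v β a' / (a' i * v (β - ω i) a')) a
          (Pi.single k 1)) • ω k = 0) ∧
    (∀ a0 ∈ Ω, ∃ Ω' ⊆ Ω, IsOpen Ω' ∧ a0 ∈ Ω' ∧
      ∃ Log : Fin N → (Fin N → ℂ) → ℂ,
        (∀ j, AnalyticOnNhd ℂ (Log j) Ω') ∧
        (∀ j, ∀ a ∈ Ω', Complex.exp (Log j a) = a j) ∧
        ∃ Φ Ψ : Fin N → V → (Fin r → ℂ) → ℂ,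
          ∀ (i : Fin N) (β : V), ∀ a ∈ Ω',
            fderiv ℂ (v β) a (Pi.single i 1) / v (β - ω i) a
              = Φ i β (fun k => Complex.exp (∑ j, l k j * Log j a)) ∧
            v β a / (a i * v (β - ω i) a)
              = Ψ i β (fun k => Complex.exp (∑ j, l k j * Log j a))) :=
  stmt6_general ω π hπ l hlspan Ω hΩopen hΩ0 v hv hvne hvGG2
end

section
/- (Theorem 1) Let Ω ⊆ (ℂ∖{0})^N be open and connected, let v(β,a) be a fixed analytic nowhere-vanishing solution of (GG2) on V × Ω, let l^1,…,l^r be a basis of L = {ℓ ∈ ℂ^N : Σ_j ℓ_j ω^j = 0} (r = N − n), and suppose analytic branches of x(a) = (a^{l^1},…,a^{l^r}) are chosen on Ω, together with analytic functions φ_i(β,x), ψ_i(β,x) satisfying (∂v/∂a_i)(β,a)/v(β − ω^i,a) = φ_i(β, x(a)) and v(β,a)/(a_i v(β − ω^i,a)) = ψ_i(β, x(a)) for i = 1,…,N. Then a function of the form f(β,a) = v(β,a) F(β, x(a)), with F analytic, satisfies the GG-system (GG1), (GG2) on V × Ω if and only if F satisfies the reduced system: F(β − ω^i, x) = φ_i(β,x)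 F(β,x) + Σ_{k=1}^r l^k_i ψ_i(β,x) x_k (∂F/∂x_k)(β,x) for each i = 1, …, N, where l^k_i denotes the i-th coordinate of the vector l^k ∈ ℂ^N. -/
/-!
Since `x_k = exp (∑_j l^k_j Log_j)` with `exp ∘ Log_j = a_j`, the Euler derivative satisfies
`a_i ∂x_k/∂a_i = l^k_i x_k`, so for `f = v · F(β, x(a))`
`a_i ∂f/∂a_i = (a_i ∂v/∂a_i) F + v ∑_k l^k_i x_k ∂F/∂x_k`.
Dividing by `a_i v(β - ω^i)` turns (GG1) into the reduced equation. (GG2) for `f` holds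
automatically: the `∂F/∂x_k` terms are weighted by `∑_j l^k_j ω^j = 0`, and the remaining
term is `F` times (GG2) for `v`.
-/

open Complex Filter Topology

theorem LinearMap.apply_eq_sum_smul_single {R κ M : Type*} [CommSemiring R] [Fintype κ]
    [DecidableEq κ] [AddCommMonoid M] [Module R M] (L : (κ → R) →ₗ[R] M) (w : κ → R) :
    L w = ∑ k, w k • L (Pi.single k 1) := by
  conv_lhs => rw [← Finset.univ_sum_single w]
  simp [map_sum, ← map_smul, ← Pi.single_smul]

theorem sum_smul_eq_zero_of_mem_ker {R ι M : Type*} [CommSemiring R] [Fintype ι]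
    [DecidableEq ι] [AddCommMonoid M] [Module R M] {π : (ι → R) →ₗ[R] M} {ω : ι → M}
    (hπ : ∀ j, π (Pi.single j 1) = ω j) {x : ι → R} (hx : x ∈ LinearMap.ker π) :
    ∑ j, x j • ω j = 0 := by
  simpa [← hπ, ← π.apply_eq_sum_smul_single] using hx

theorem sum_smul_eq_smul_sum_of_eq_add {R ι κ M : Type*} [CommSemiring R] [Fintype ι]
    [Fintype κ] [AddCommMonoid M] [Module R M] {ω : ι → M} {l : κ → ι → R}
    (hl : ∀ k, ∑ j, l k j • ω j = 0) {p q : ι → R} {c : R} {y : κ → R}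
    (h : ∀ j, p j = q j * c + ∑ k, l k j * y k) :
    ∑ j, p j • ω j = c • ∑ j, q j • ω j := by
  have hcorr : ∑ j, (∑ k, l k j * y k) • ω j = 0 := by
    simp_rw [Finset.sum_smul, mul_comm (l _ _), mul_smul]
    rw [Finset.sum_comm]
    simp [← Finset.smul_sum, hl]
  simp only [h, add_smul, Finset.sum_add_distrib, hcorr, add_zero, Finset.smul_sum, mul_comm _ c,
    mul_smul]

theorem fderiv_apply_of_exp_eq_coord {ι : Type*} [Fintype ι] {g : (ι → ℂ) → ℂ} {a : ι → ℂ}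
    {j : ι} (hg : DifferentiableAt ℂ g a) (hexp : ∀ᶠ b in 𝓝 a, exp (g b) = b j) (u : ι → ℂ) :
    fderiv ℂ g a u = u j / a j := by
  have hcomp : HasFDerivAt (fun b => b j) (exp (g a) • fderiv ℂ g a) a :=
    ((hasDerivAt_exp (g a)).comp_hasFDerivAt a hg.hasFDerivAt).congr_of_eventuallyEq
      (hexp.mono fun _ h => h.symm)
  have hproj := congrArg (· u) (hcomp.unique (hasFDerivAt_apply j a))
  rw [← hexp.self_of_nhds]
  exact eq_div_of_mul_eq (exp_ne_zero _) (by simpa [mul_comm] using hproj)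

section Monomial

variable {ι κ : Type*} [Fintype ι] [DecidableEq ι] {Log : ι → (ι → ℂ) → ℂ} {l : κ → ι → ℂ}
  {X : (ι → ℂ) → κ → ℂ} {a : ι → ℂ}

theorem hasFDerivAt_monomial (hLog : ∀ j, DifferentiableAt ℂ (Log j) a)
    (hexp : ∀ j, ∀ᶠ b in 𝓝 a, exp (Log j b) = b j)
    (hX : ∀ᶠ b in 𝓝 a, ∀ k, X b k = exp (∑ j, l k j * Log j b)) :
    ∃ D : (ι → ℂ) →L[ℂ] κ → ℂ, HasFDerivAt X D a ∧
      ∀ i, a i • D (Pi.single i 1) = fun k => l k i * X a k := by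
  refine ⟨.pi fun k => X a k • ∑ j, l k j • fderiv ℂ (Log j) a, hasFDerivAt_pi.2 fun k => ?_,
    fun i => funext fun k => ?_⟩
  · have hsum : HasFDerivAt (fun b => ∑ j, l k j * Log j b) (∑ j, l k j • fderiv ℂ (Log j) a) a :=
      HasFDerivAt.fun_sum fun j _ => (hLog j).hasFDerivAt.const_mul (l k j)
    rw [hX.self_of_nhds k]
    exact ((hasDerivAt_exp _).comp_hasFDerivAt a hsum).congr_of_eventuallyEq
      (hX.mono fun b h => h k)
  · have hai : a i ≠ 0 := (hexp i).self_of_nhds ▸ exp_ne_zero _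
    simp only [ContinuousLinearMap.coe_pi', smul_apply, sum_apply, Pi.smul_apply, smul_eq_mul,
      fderiv_apply_of_exp_eq_coord (hLog _) (hexp _), Pi.single_apply, ite_div, zero_div, mul_ite,
      mul_zero, Finset.sum_ite_eq', Finset.mem_univ, if_true]
    field_simp

variable [Fintype κ] [DecidableEq κ] {G : (κ → ℂ) → ℂ}

theorem mul_fderiv_mul_comp_monomial (hLog : ∀ j, DifferentiableAt ℂ (Log j) a)
    (hexp : ∀ j, ∀ᶠ b in 𝓝 a, exp (Log j b) = b j)
    (hX : ∀ᶠ b in 𝓝 a, ∀ k, X b k = exp (∑ j, l k j * Log j b)) {v : (ι → ℂ) → ℂ}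
    (hv : DifferentiableAt ℂ v a) (hG : DifferentiableAt ℂ G (X a)) (i : ι) :
    a i * fderiv ℂ (fun b => v b * G (X b)) a (Pi.single i 1) =
      a i * fderiv ℂ v a (Pi.single i 1) * G (X a) +
        v a * ∑ k, l k i * X a k * fderiv ℂ G (X a) (Pi.single k 1) := by
  obtain ⟨D, hD, hDi⟩ := hasFDerivAt_monomial hLog hexp hX
  have hGX : HasFDerivAt (fun b => G (X b)) ((fderiv ℂ G (X a)).comp D) a :=
    hG.hasFDerivAt.comp a hD
  have hGX_euler : a i * (fderiv ℂ G (X a)).comp D (Pi.single i 1) =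
      ∑ k, l k i * X a k * fderiv ℂ G (X a) (Pi.single k 1) := by
    rw [ContinuousLinearMap.comp_apply, ← smul_eq_mul, ← map_smul, hDi,
      ← ContinuousLinearMap.coe_coe, LinearMap.apply_eq_sum_smul_single]
    rfl
  rw [(hv.hasFDerivAt.fun_mul hGX).fderiv, ← hGX_euler]
  simp only [add_apply, smul_apply, smul_eq_mul]
  ring

end Monomial

theorem stmt7_general {V : Type*} [NormedAddCommGroup V] [NormedSpace ℂ V]
    {N r : ℕ} (ω : Fin N → V)
    (π : (Fin N → ℂ) →ₗ[ℂ] V) (hπ : ∀ j, π (Pi.single j 1) = ω j)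
    (l : Fin r → Fin N → ℂ)
    (hlspan : Submodule.span ℂ (Set.range l) = LinearMap.ker π)
    (Ω : Set (Fin N → ℂ)) (hΩopen : IsOpen Ω)
    (hΩ0 : ∀ a ∈ Ω, ∀ j, a j ≠ 0)
    (v : V → (Fin N → ℂ) → ℂ)
    (hv : AnalyticOnNhd ℂ (fun p : V × (Fin N → ℂ) => v p.1 p.2) (Set.univ ×ˢ Ω))
    (hvne : ∀ (β : V), ∀ a ∈ Ω, v β a ≠ 0)
    (hvGG2 : ∀ (β : V), ∀ a ∈ Ω,
      ∑ j, (a j * fderiv ℂ (v β) a (Pi.single j 1)) • ω j = v β a • β)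
    (Log : Fin N → (Fin N → ℂ) → ℂ)
    (hLogA : ∀ j, AnalyticOnNhd ℂ (Log j) Ω)
    (hLog : ∀ j, ∀ a ∈ Ω, Complex.exp (Log j a) = a j)
    (X : (Fin N → ℂ) → Fin r → ℂ)
    (hX : ∀ a ∈ Ω, ∀ k, X a k = Complex.exp (∑ j, l k j * Log j a))
    (U : Set (Fin r → ℂ)) (hXU : X '' Ω ⊆ U)
    (φ ψ : Fin N → V → (Fin r → ℂ) → ℂ)
    (hφ : ∀ (i : Fin N) (β : V), ∀ a ∈ Ω,
      fderiv ℂ (v β) a (Pi.single i 1) / v (β - ω i) a = φ i β (X a))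
    (hψ : ∀ (i : Fin N) (β : V), ∀ a ∈ Ω,
      v β a / (a i * v (β - ω i) a) = ψ i β (X a))
    (F : V → (Fin r → ℂ) → ℂ)
    (hFA : AnalyticOnNhd ℂ (fun p : V × (Fin r → ℂ) => F p.1 p.2) (Set.univ ×ˢ U)) :
    ((∀ (β : V), ∀ a ∈ Ω, ∀ (i : Fin N),
        fderiv ℂ (fun a' => v β a' * F β (X a')) a (Pi.single i 1)
          = v (β - ω i) a * F (β - ω i) (X a)) ∧
     (∀ (β : V), ∀ a ∈ Ω,
        ∑ j, (a j * fderiv ℂ (fun a' => v β a' * F β (X a')) a (Pi.single j 1)) • ω j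
          = (v β a * F β (X a)) • β))
    ↔
    (∀ (β : V), ∀ x ∈ X '' Ω, ∀ (i : Fin N),
      F (β - ω i) x = φ i β x * F β x +
        ∑ k, l k i * ψ i β x * x k * fderiv ℂ (F β) x (Pi.single k 1)) := by
  have hEuler : ∀ β, ∀ a ∈ Ω, ∀ i,
      a i * fderiv ℂ (fun a' => v β a' * F β (X a')) a (Pi.single i 1) =
        a i * fderiv ℂ (v β) a (Pi.single i 1) * F β (X a) +
          v β a * ∑ k, l k i * X a k * fderiv ℂ (F β) (X a) (Pi.single k 1) :=
    fun β a ha => mul_fderiv_mul_comp_monomial (fun j => (hLogA j a ha).differentiableAt)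
      (fun j => eventually_of_mem (hΩopen.mem_nhds ha) (hLog j))
      (eventually_of_mem (hΩopen.mem_nhds ha) hX)
      (hv (β, a) ⟨trivial, ha⟩).curry_right.differentiableAt
      (hFA (β, X a) ⟨trivial, hXU ⟨a, ha, rfl⟩⟩).curry_right.differentiableAt
  have hGG1 : ∀ β, ∀ a ∈ Ω, ∀ i,
      fderiv ℂ (fun a' => v β a' * F β (X a')) a (Pi.single i 1) =
          v (β - ω i) a * F (β - ω i) (X a) ↔
        F (β - ω i) (X a) = φ i β (X a) * F β (X a) +
          ∑ k, l k i * ψ i β (X a) * X a k * fderiv ℂ (F β) (X a) (Pi.single k 1) := by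
    intro β a ha i
    have hai := hΩ0 a ha i
    have hvi := hvne (β - ω i) a ha
    rw [← hφ i β a ha, ← hψ i β a ha, ← mul_right_inj' hai, hEuler β a ha i]
    simp only [mul_comm (l _ i), mul_assoc, ← Finset.mul_sum]
    field_simp
    exact eq_comm
  have hker : ∀ k, ∑ j, l k j • ω j = 0 := fun k =>
    sum_smul_eq_zero_of_mem_ker hπ (hlspan ▸ Submodule.subset_span ⟨k, rfl⟩)
  have hGG2 : ∀ β, ∀ a ∈ Ω,
      ∑ j, (a j * fderiv ℂ (fun a' => v β a' * F β (X a')) a (Pi.single j 1)) • ω j =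
        (v β a * F β (X a)) • β := fun β a ha => by
    rw [sum_smul_eq_smul_sum_of_eq_add hker (y := fun k => v β a * X a k *
      fderiv ℂ (F β) (X a) (Pi.single k 1)) (fun j => ?_), hvGG2 β a ha, smul_smul, mul_comm]
    rw [hEuler β a ha j, Finset.mul_sum]
    exact congrArg _ (Finset.sum_congr rfl fun k _ => by ring)
  exact ⟨fun h β x ⟨a, ha, hx⟩ i => hx ▸ (hGG1 β a ha i).1 (h.1 β a ha i),
    fun h => ⟨fun β a ha i => (hGG1 β a ha i).2 (h β (X a) ⟨a, ha, rfl⟩ i), hGG2⟩⟩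

/-- Theorem 1: with `v` a fixed analytic nowhere-vanishing solution of (GG2) on `V × Ω`,
`l^1,…,l^r` a basis of `L = {ℓ : ∑_j ℓ_j ω^j = 0}`, chosen analytic branches
`x(a) = (a^{l^1},…,a^{l^r})` on `Ω` (via analytic logarithms of the coordinates), and
analytic `φ_i, ψ_i` with `(∂v/∂a_i)/v(β-ω^i,·) = φ_i(β,x(a))`,
`v(β,·)/(a_i v(β-ω^i,·)) = ψ_i(β,x(a))`, a function `f = v·F(β,x(a))` with `F` analytic
satisfies the GG-system (GG1),(GG2) on `V × Ω` iff `F` satisfies the reduced system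
`F(β-ω^i,x) = φ_i(β,x) F(β,x) + ∑_k l^k_i ψ_i(β,x) x_k ∂F/∂x_k` for `i = 1,…,N`. -/
theorem stmt7 {V : Type*} [NormedAddCommGroup V] [NormedSpace ℂ V] [FiniteDimensional ℂ V]
    {N r : ℕ} (ω : Fin N → V)
    (hspan : Submodule.span ℂ (Set.range ω) = ⊤)
    (hr : r = N - Module.finrank ℂ V)
    (π : (Fin N → ℂ) →ₗ[ℂ] V) (hπ : ∀ j, π (Pi.single j 1) = ω j)
    (l : Fin r → Fin N → ℂ)
    (hlind : LinearIndependent ℂ l)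
    (hlspan : Submodule.span ℂ (Set.range l) = LinearMap.ker π)
    (Ω : Set (Fin N → ℂ)) (hΩopen : IsOpen Ω) (hΩconn : IsConnected Ω)
    (hΩ0 : ∀ a ∈ Ω, ∀ j, a j ≠ 0)
    (v : V → (Fin N → ℂ) → ℂ)
    (hv : AnalyticOnNhd ℂ (fun p : V × (Fin N → ℂ) => v p.1 p.2) (Set.univ ×ˢ Ω))
    (hvne : ∀ (β : V), ∀ a ∈ Ω, v β a ≠ 0)
    (hvGG2 : ∀ (β : V), ∀ a ∈ Ω,
      ∑ j, (a j * fderiv ℂ (v β) a (Pi.single j 1)) • ω j = v β a • β)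
    (Log : Fin N → (Fin N → ℂ) → ℂ)
    (hLogA : ∀ j, AnalyticOnNhd ℂ (Log j) Ω)
    (hLog : ∀ j, ∀ a ∈ Ω, Complex.exp (Log j a) = a j)
    (X : (Fin N → ℂ) → Fin r → ℂ)
    (hX : ∀ a ∈ Ω, ∀ k, X a k = Complex.exp (∑ j, l k j * Log j a))
    (U : Set (Fin r → ℂ)) (hUopen : IsOpen U) (hXU : X '' Ω ⊆ U)
    (φ ψ : Fin N → V → (Fin r → ℂ) → ℂ)
    (hφA : ∀ i, AnalyticOnNhd ℂ (fun p : V × (Fin r → ℂ) => φ i p.1 p.2) (Set.univ ×ˢ U))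
    (hψA : ∀ i, AnalyticOnNhd ℂ (fun p : V × (Fin r → ℂ) => ψ i p.1 p.2) (Set.univ ×ˢ U))
    (hφ : ∀ (i : Fin N) (β : V), ∀ a ∈ Ω,
      fderiv ℂ (v β) a (Pi.single i 1) / v (β - ω i) a = φ i β (X a))
    (hψ : ∀ (i : Fin N) (β : V), ∀ a ∈ Ω,
      v β a / (a i * v (β - ω i) a) = ψ i β (X a))
    (F : V → (Fin r → ℂ) → ℂ)
    (hFA : AnalyticOnNhd ℂ (fun p : V × (Fin r → ℂ) => F p.1 p.2) (Set.univ ×ˢ U)) :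
    ((∀ (β : V), ∀ a ∈ Ω, ∀ (i : Fin N),
        fderiv ℂ (fun a' => v β a' * F β (X a')) a (Pi.single i 1)
          = v (β - ω i) a * F (β - ω i) (X a)) ∧
     (∀ (β : V), ∀ a ∈ Ω,
        ∑ j, (a j * fderiv ℂ (fun a' => v β a' * F β (X a')) a (Pi.single j 1)) • ω j
          = (v β a * F β (X a)) • β))
    ↔
    (∀ (β : V), ∀ x ∈ X '' Ω, ∀ (i : Fin N),
      F (β - ω i) x = φ i β x * F β x +
        ∑ k, l k i * ψ i β x * x k * fderiv ℂ (F β) x (Pi.single k 1)) :=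
  stmt7_general ω π hπ l hlspan Ω hΩopen hΩ0 v hv hvne hvGG2 Log hLogA hLog X hX U hXU φ ψ hφ hψ F
    hFA
end

section
/- (Proposition 1) Let I ⊆ {1,…,N} be a base and let Ω = {a ∈ ℂ^N : a_i ∈ ℂ∖(−∞,0] for i ∈ I}, with principal branches of complex powers. Define v(β,a) = ∏_{i∈I} a_i^{β_i} and, for j ∈ J, x_j(a) = a_j ∏_{i∈I} a_i^{l^j_i}. Then for an analytic function F(β,x) on V × ℂ^J, the function f(β,a) = v(β,a) · F(β, x(a)) satisfies the GG-system (GG1), (GG2) on V × Ω if and only if F satisfies the reduced GG-system (R1), (R2) associated with A and I. -/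
/-!
Write `∂_k = ∂/∂a_k`. On `Ω` the monomials satisfy `a_k ∂_k v = β_k v` and
`a_k ∂_k x_j = l^j_k x_j` for `k ∈ I`, while `∂_k v = 0` and
`∂_k x_j = δ_{jk} ∏_{i ∈ I} a_i^{l^k_i}` for `k ∉ I`. By the chain rule,
`a_k ∂_k f = v · (β_k F + Σ_j l^j_k x_j ∂F/∂x_j)` for `k ∈ I` and
`∂_k f = v · ∏_{i ∈ I} a_i^{l^k_i} · ∂F/∂x_k` for `k ∉ I`. Since the coordinates on the base `I`
are additive, `a_k v(β - ω^k) = v(β)` for `k ∈ I` and `v(β - ω^k) = v(β) ∏_{i ∈ I} a_i^{l^k_i}`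
for `k ∉ I`; cancelling these nonzero factors, (GG1) at `(β, a, k)` is the reduced equation at
`(β, x(a), k)`. Every `x` is `x(a)` for the point `a ∈ Ω` with `a_i = 1` on `I` and `a_j = x_j`
off `I`, which gives the converse. (GG2) holds for every `f` of this form, as Euler's identity
coming from `Σ_{i ∈ I} β_i ω^i = β` and `Σ_{i ∈ I} l^j_i ω^i = -ω^j`.
-/

open Complex

section Calculus

variable {𝕜 : Type*} [NontriviallyNormedField 𝕜] {E : Type*} [NormedAddCommGroup E]
  [NormedSpace 𝕜 E] {J : Type*} [Fintype J] [DecidableEq J]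

theorem ContinuousLinearMap.apply_eq_sum_mul_single (T : (J → 𝕜) →L[𝕜] 𝕜) (u : J → 𝕜) :
    T u = ∑ j, u j * T (Pi.single j 1) := by
  conv_lhs => rw [← Finset.univ_sum_single u]
  rw [map_sum]
  refine Finset.sum_congr rfl fun j _ => ?_
  rw [← smul_eq_mul, ← map_smul, ← Pi.single_smul, smul_eq_mul, mul_one]

theorem fderiv_comp_apply_eq_sum {G : (J → 𝕜) → 𝕜} {x : E → J → 𝕜} {a : E}
    (hG : DifferentiableAt 𝕜 G (x a)) (hx : ∀ j, DifferentiableAt 𝕜 (fun a => x a j) a) (v : E) :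
    fderiv 𝕜 (fun a => G (x a)) a v
      = ∑ j, fderiv 𝕜 (fun a => x a j) a v * fderiv 𝕜 G (x a) (Pi.single j 1) := by
  have hx' : DifferentiableAt 𝕜 x a := differentiableAt_pi.2 hx
  rw [fderiv_fun_comp a hG hx', ContinuousLinearMap.comp_apply,
    ContinuousLinearMap.apply_eq_sum_mul_single]
  simp only [fderiv_pi hx, ContinuousLinearMap.pi_apply]

end Calculus

namespace GGSystem

variable {ι : Type*} (I : Finset ι)

/-- `v(β, a)` of the paper, for `e = (β_i)`; only the coordinates in `I` enter. -/
noncomputable def monomial (e a : ι → ℂ) : ℂ := ∏ i ∈ I, a i ^ e i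

/-- `x(a)` of the paper, for `l j = (l^j_i)_i`. -/
noncomputable def reducedVar (l : {j // j ∉ I} → ι → ℂ) (a : ι → ℂ) : {j // j ∉ I} → ℂ :=
  fun j => a j * monomial I (l j) a

variable {I} {a : ι → ℂ} {l : {j // j ∉ I} → ι → ℂ}

theorem monomial_congr {e d : ι → ℂ} (h : ∀ i ∈ I, e i = d i) (a : ι → ℂ) :
    monomial I e a = monomial I d a :=
  Finset.prod_congr rfl fun i hi => by rw [h i hi]

theorem monomial_add (ha : ∀ i ∈ I, a i ∈ slitPlane) (e d : ι → ℂ) :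
    monomial I (e + d) a = monomial I e a * monomial I d a := by
  rw [monomial, monomial, monomial, ← Finset.prod_mul_distrib]
  exact Finset.prod_congr rfl fun i hi => cpow_add _ _ (slitPlane_ne_zero (ha i hi))

theorem monomial_ne_zero (ha : ∀ i ∈ I, a i ∈ slitPlane) (e : ι → ℂ) : monomial I e a ≠ 0 :=
  Finset.prod_ne_zero_iff.2 fun i hi => cpow_ne_zero_iff.2 (.inl (slitPlane_ne_zero (ha i hi)))

section Coordinates

variable {V : Type*} [AddCommGroup V] [Module ℂ V] {ω : ι → V} {c : V → ι → ℂ}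

theorem eq_of_sum_smul_eq (hind : LinearIndependent ℂ (fun i : I => ω i)) {d d' : ι → ℂ}
    (h : ∑ i ∈ I, d i • ω i = ∑ i ∈ I, d' i • ω i) : ∀ i ∈ I, d i = d' i := by
  intro i hi
  refine sub_eq_zero.1 (Fintype.linearIndependent_iff.1 hind (fun i => d i - d' i) ?_ ⟨i, hi⟩)
  simp only [sub_smul, Finset.sum_sub_distrib, Finset.sum_coe_sort I (fun i => d i • ω i),
    Finset.sum_coe_sort I (fun i => d' i • ω i), h, sub_self]

theorem monomial_coord_sub (hind : LinearIndependent ℂ (fun i : I => ω i))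
    (hc : ∀ β, ∑ i ∈ I, c β i • ω i = β) (ha : ∀ i ∈ I, a i ∈ slitPlane) (β γ : V) :
    monomial I (c (β - γ)) a = monomial I (c β) a * monomial I (c (-γ)) a := by
  rw [← monomial_add ha]
  refine monomial_congr (eq_of_sum_smul_eq hind ?_) a
  simp only [Pi.add_apply, add_smul, Finset.sum_add_distrib, hc, sub_eq_add_neg]

variable [DecidableEq ι]

theorem monomial_neg_single {k : ι} (hk : k ∈ I) (a : ι → ℂ) :
    monomial I (-Pi.single k 1) a = (a k)⁻¹ := by
  rw [monomial, Finset.prod_eq_single_of_mem k hk fun i _ hik => by simp [hik]]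
  simp [cpow_neg_one]

theorem mul_monomial_coord_sub_of_mem (hind : LinearIndependent ℂ (fun i : I => ω i))
    (hc : ∀ β, ∑ i ∈ I, c β i • ω i = β) (ha : ∀ i ∈ I, a i ∈ slitPlane) (β : V) {k : ι}
    (hk : k ∈ I) :
    a k * monomial I (c (β - ω k)) a = monomial I (c β) a := by
  have hneg : ∀ i ∈ I, c (-ω k) i = (-Pi.single k 1 : ι → ℂ) i := by
    refine eq_of_sum_smul_eq hind ?_
    simp [Pi.single_apply, hc, hk]
  rw [monomial_coord_sub hind hc ha, monomial_congr hneg, monomial_neg_single hk,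
    mul_left_comm, mul_inv_cancel₀ (slitPlane_ne_zero (ha k hk)), mul_one]

end Coordinates

variable [DecidableEq ι]

variable (I) in
def extendOne (x : {j // j ∉ I} → ℂ) : ι → ℂ :=
  fun k => if h : k ∈ I then 1 else x ⟨k, h⟩

theorem extendOne_mem_slitPlane (x : {j // j ∉ I} → ℂ) :
    ∀ i ∈ I, extendOne I x i ∈ slitPlane := fun i hi => by
  simp [extendOne, hi, one_mem_slitPlane]

theorem monomial_extendOne (e : ι → ℂ) (x : {j // j ∉ I} → ℂ) :
    monomial I e (extendOne I x) = 1 :=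
  Finset.prod_eq_one fun i hi => by simp [extendOne, hi]

theorem reducedVar_extendOne (x : {j // j ∉ I} → ℂ) : reducedVar I l (extendOne I x) = x := by
  ext j
  simp [reducedVar, monomial_extendOne, extendOne, j.2]

variable [Fintype ι]

theorem hasFDerivAt_monomial (ha : ∀ i ∈ I, a i ∈ slitPlane) (e : ι → ℂ) :
    HasFDerivAt (monomial I e)
      (∑ i ∈ I, (∏ j ∈ I.erase i, a j ^ e j) •
        (e i * a i ^ (e i - 1)) • ContinuousLinearMap.proj (R := ℂ) (φ := fun _ : ι => ℂ) i) a := by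
  refine HasFDerivAt.finsetProd fun i hi => ?_
  have hproj : HasFDerivAt (fun a : ι → ℂ => a i) (ContinuousLinearMap.proj (R := ℂ) i) a :=
    hasFDerivAt_apply i a
  simpa [Function.comp_def] using
    (hasStrictDerivAt_cpow_const (ha i hi)).hasDerivAt.comp_hasFDerivAt a hproj

theorem differentiableAt_monomial (ha : ∀ i ∈ I, a i ∈ slitPlane) (e : ι → ℂ) :
    DifferentiableAt ℂ (monomial I e) a :=
  (hasFDerivAt_monomial ha e).differentiableAt

theorem fderiv_monomial_single_of_notMem (ha : ∀ i ∈ I, a i ∈ slitPlane) (e : ι → ℂ)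
    {k : ι} (hk : k ∉ I) :
    fderiv ℂ (monomial I e) a (Pi.single k 1) = 0 := by
  rw [(hasFDerivAt_monomial ha e).fderiv, _root_.sum_apply]
  refine Finset.sum_eq_zero fun i hi => ?_
  simp [show i ≠ k from fun h => hk (h ▸ hi)]

theorem mul_fderiv_monomial_single_of_mem (ha : ∀ i ∈ I, a i ∈ slitPlane) (e : ι → ℂ)
    {k : ι} (hk : k ∈ I) :
    a k * fderiv ℂ (monomial I e) a (Pi.single k 1) = e k * monomial I e a := by
  rw [(hasFDerivAt_monomial ha e).fderiv, _root_.sum_apply, monomial,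
    ← Finset.mul_prod_erase I _ hk, Finset.sum_eq_single_of_mem k hk fun i _ hik => by simp [hik]]
  have hak := slitPlane_ne_zero (ha k hk)
  simp only [FunLike.coe_smul, Pi.smul_apply, ContinuousLinearMap.proj_apply, Pi.single_eq_same,
    smul_eq_mul, mul_one, cpow_sub _ _ hak, cpow_one]
  field_simp

theorem differentiableAt_reducedVar_apply (ha : ∀ i ∈ I, a i ∈ slitPlane) (j : {j // j ∉ I}) :
    DifferentiableAt ℂ (fun a => reducedVar I l a j) a :=
  (differentiableAt_apply j.1 a).mul (differentiableAt_monomial ha (l j))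

theorem fderiv_reducedVar_apply (ha : ∀ i ∈ I, a i ∈ slitPlane) (j : {j // j ∉ I})
    (v : ι → ℂ) :
    fderiv ℂ (fun a => reducedVar I l a j) a v
      = a j * fderiv ℂ (monomial I (l j)) a v + monomial I (l j) a * v j := by
  unfold reducedVar
  rw [fderiv_fun_mul (differentiableAt_apply j.1 a) (differentiableAt_monomial ha (l j)),
    (hasFDerivAt_apply j.1 a).fderiv]
  simp

theorem mul_fderiv_reducedVar_apply_single_of_mem (ha : ∀ i ∈ I, a i ∈ slitPlane)
    (j : {j // j ∉ I}) {k : ι} (hk : k ∈ I) :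
    a k * fderiv ℂ (fun a => reducedVar I l a j) a (Pi.single k 1)
      = l j k * reducedVar I l a j := by
  have hjk : j.1 ≠ k := fun h => j.2 (h ▸ hk)
  rw [fderiv_reducedVar_apply ha, Pi.single_eq_of_ne hjk, mul_zero, add_zero, mul_left_comm,
    mul_fderiv_monomial_single_of_mem ha _ hk, reducedVar]
  ring

theorem fderiv_reducedVar_apply_single_of_notMem (ha : ∀ i ∈ I, a i ∈ slitPlane)
    (j k : {j // j ∉ I}) :
    fderiv ℂ (fun a => reducedVar I l a j) a (Pi.single k 1)
      = if j = k then monomial I (l k) a else 0 := by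
  rw [fderiv_reducedVar_apply ha, fderiv_monomial_single_of_notMem ha _ k.2, mul_zero, zero_add]
  split_ifs with hjk
  · simp [hjk]
  · simp [Pi.single_eq_of_ne (Subtype.coe_ne_coe.2 hjk)]

variable {G : ({j // j ∉ I} → ℂ) → ℂ}

theorem differentiableAt_comp_reducedVar (hG : DifferentiableAt ℂ G (reducedVar I l a))
    (ha : ∀ i ∈ I, a i ∈ slitPlane) :
    DifferentiableAt ℂ (fun a => G (reducedVar I l a)) a :=
  hG.comp a (differentiableAt_pi.2 (differentiableAt_reducedVar_apply ha))

theorem mul_fderiv_single_of_mem (hG : DifferentiableAt ℂ G (reducedVar I l a))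
    (ha : ∀ i ∈ I, a i ∈ slitPlane) (e : ι → ℂ) {k : ι} (hk : k ∈ I) :
    a k * fderiv ℂ (fun a => monomial I e a * G (reducedVar I l a)) a (Pi.single k 1)
      = monomial I e a * (e k * G (reducedVar I l a) + ∑ j, l j k * reducedVar I l a j *
          fderiv ℂ G (reducedVar I l a) (Pi.single j 1)) := by
  rw [fderiv_fun_mul (differentiableAt_monomial ha e) (differentiableAt_comp_reducedVar hG ha)]
  simp only [_root_.add_apply, FunLike.coe_smul, Pi.smul_apply, smul_eq_mul]
  rw [fderiv_comp_apply_eq_sum hG (differentiableAt_reducedVar_apply ha)]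
  have hsum : a k * ∑ j, fderiv ℂ (fun a => reducedVar I l a j) a (Pi.single k 1) *
        fderiv ℂ G (reducedVar I l a) (Pi.single j 1)
      = ∑ j, l j k * reducedVar I l a j * fderiv ℂ G (reducedVar I l a) (Pi.single j 1) := by
    rw [Finset.mul_sum]
    refine Finset.sum_congr rfl fun j _ => ?_
    rw [← mul_assoc, mul_fderiv_reducedVar_apply_single_of_mem ha j hk]
  linear_combination monomial I e a * hsum +
    G (reducedVar I l a) * mul_fderiv_monomial_single_of_mem ha e hk

theorem fderiv_single_of_notMem (hG : DifferentiableAt ℂ G (reducedVar I l a))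
    (ha : ∀ i ∈ I, a i ∈ slitPlane) (e : ι → ℂ) (k : {j // j ∉ I}) :
    fderiv ℂ (fun a => monomial I e a * G (reducedVar I l a)) a (Pi.single k 1)
      = monomial I e a * monomial I (l k) a * fderiv ℂ G (reducedVar I l a) (Pi.single k 1) := by
  rw [fderiv_fun_mul (differentiableAt_monomial ha e) (differentiableAt_comp_reducedVar hG ha)]
  simp only [_root_.add_apply, FunLike.coe_smul, Pi.smul_apply, smul_eq_mul]
  rw [fderiv_comp_apply_eq_sum hG (differentiableAt_reducedVar_apply ha),
    fderiv_monomial_single_of_notMem ha e k.2]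
  simp only [fderiv_reducedVar_apply_single_of_notMem ha, ite_mul, zero_mul,
    Finset.sum_ite_eq', Finset.mem_univ, if_true]
  ring

theorem fderiv_single_eq_iff_of_mem (hG : DifferentiableAt ℂ G (reducedVar I l a))
    (ha : ∀ i ∈ I, a i ∈ slitPlane) {e e' : ι → ℂ} {k : ι} (hk : k ∈ I)
    (he' : a k * monomial I e' a = monomial I e a) (G' : ({j // j ∉ I} → ℂ) → ℂ) :
    fderiv ℂ (fun a => monomial I e a * G (reducedVar I l a)) a (Pi.single k 1)
        = monomial I e' a * G' (reducedVar I l a) ↔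
      e k * G (reducedVar I l a) + ∑ j, l j k * reducedVar I l a j *
          fderiv ℂ G (reducedVar I l a) (Pi.single j 1) = G' (reducedVar I l a) := by
  rw [← (mul_right_injective₀ (slitPlane_ne_zero (ha k hk))).eq_iff,
    mul_fderiv_single_of_mem hG ha e hk, ← mul_assoc, he',
    (mul_right_injective₀ (monomial_ne_zero ha e)).eq_iff]

theorem fderiv_single_eq_iff_of_notMem (hG : DifferentiableAt ℂ G (reducedVar I l a))
    (ha : ∀ i ∈ I, a i ∈ slitPlane) {e e' : ι → ℂ} (k : {j // j ∉ I})
    (he' : monomial I e' a = monomial I e a * monomial I (l k) a)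
    (G' : ({j // j ∉ I} → ℂ) → ℂ) :
    fderiv ℂ (fun a => monomial I e a * G (reducedVar I l a)) a (Pi.single k 1)
        = monomial I e' a * G' (reducedVar I l a) ↔
      fderiv ℂ G (reducedVar I l a) (Pi.single k 1) = G' (reducedVar I l a) := by
  rw [fderiv_single_of_notMem hG ha e k, he',
    (mul_right_injective₀ (mul_ne_zero (monomial_ne_zero ha e) (monomial_ne_zero ha (l k)))).eq_iff]

theorem sum_mul_fderiv_single_smul {V : Type*} [AddCommGroup V] [Module ℂ V] {ω : ι → V}
    {β : V} {e : ι → ℂ} (he : ∑ i ∈ I, e i • ω i = β)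
    (hl : ∀ j : {j // j ∉ I}, ∑ i ∈ I, l j i • ω i = -ω j)
    (hG : DifferentiableAt ℂ G (reducedVar I l a)) (ha : ∀ i ∈ I, a i ∈ slitPlane) :
    ∑ k, (a k * fderiv ℂ (fun a => monomial I e a * G (reducedVar I l a)) a (Pi.single k 1)) • ω k
      = (monomial I e a * G (reducedVar I l a)) • β := by
  have hI : ∑ k ∈ I,
      (a k * fderiv ℂ (fun a => monomial I e a * G (reducedVar I l a)) a (Pi.single k 1)) • ω k
        = (monomial I e a * G (reducedVar I l a)) • β
          + ∑ j, (monomial I e a * (reducedVar I l a j *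
              fderiv ℂ G (reducedVar I l a) (Pi.single j 1))) • -ω j := by
    rw [← he]
    simp only [← hl, Finset.smul_sum, smul_smul]
    rw [Finset.sum_comm (s := Finset.univ), ← Finset.sum_add_distrib]
    refine Finset.sum_congr rfl fun k hk => ?_
    rw [mul_fderiv_single_of_mem hG ha e hk, ← Finset.sum_smul, ← add_smul, mul_add,
      Finset.mul_sum]
    congr 2
    · ring
    · exact Finset.sum_congr rfl fun j _ => by ring
  have hJ : ∀ j : {j // j ∉ I},
      (a j * fderiv ℂ (fun a => monomial I e a * G (reducedVar I l a)) a (Pi.single j 1)) • ω j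
        = (monomial I e a * (reducedVar I l a j *
            fderiv ℂ G (reducedVar I l a) (Pi.single j 1))) • ω j := fun j => by
    rw [fderiv_single_of_notMem hG ha e j, reducedVar]
    ring_nf
  rw [← Finset.sum_add_sum_compl I, hI, Finset.sum_subtype Iᶜ fun _ => Finset.mem_compl,
    Fintype.sum_congr _ _ hJ]
  simp [smul_neg]

end GGSystem

open GGSystem

theorem stmt8_general {V : Type*} [NormedAddCommGroup V] [NormedSpace ℂ V]
    {N : ℕ} (ω : Fin N → V)
    (I : Finset (Fin N))
    (hind : LinearIndependent ℂ (fun i : I => ω i))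
    (c : V → Fin N → ℂ) (hc : ∀ β : V, ∑ i ∈ I, c β i • ω i = β)
    (F : V → ({j : Fin N // j ∉ I} → ℂ) → ℂ)
    (hFA : AnalyticOnNhd ℂ (fun p : V × ({j : Fin N // j ∉ I} → ℂ) => F p.1 p.2) Set.univ) :
    ((∀ (β : V) (a : Fin N → ℂ), (∀ i ∈ I, a i ∈ Complex.slitPlane) → ∀ (j : Fin N),
        fderiv ℂ (fun a' => (∏ i ∈ I, a' i ^ c β i) *
            F β (fun j' => a' j'.1 * ∏ i ∈ I, a' i ^ c (-(ω j'.1)) i)) a (Pi.single j 1)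
          = (∏ i ∈ I, a i ^ c (β - ω j) i) *
            F (β - ω j) (fun j' => a j'.1 * ∏ i ∈ I, a i ^ c (-(ω j'.1)) i)) ∧
     (∀ (β : V) (a : Fin N → ℂ), (∀ i ∈ I, a i ∈ Complex.slitPlane) →
        ∑ j, (a j * fderiv ℂ (fun a' => (∏ i ∈ I, a' i ^ c β i) *
            F β (fun j' => a' j'.1 * ∏ i ∈ I, a' i ^ c (-(ω j'.1)) i)) a (Pi.single j 1)) • ω j
          = ((∏ i ∈ I, a i ^ c β i) *
            F β (fun j' => a j'.1 * ∏ i ∈ I, a i ^ c (-(ω j'.1)) i)) • β))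
    ↔
    ((∀ (β : V) (x : {j : Fin N // j ∉ I} → ℂ), ∀ i ∈ I,
        c β i * F β x +
          ∑ j : {j : Fin N // j ∉ I}, c (-(ω j.1)) i * x j * fderiv ℂ (F β) x (Pi.single j 1)
          = F (β - ω i) x) ∧
     (∀ (β : V) (x : {j : Fin N // j ∉ I} → ℂ) (j : {j : Fin N // j ∉ I}),
        fderiv ℂ (F β) x (Pi.single j 1) = F (β - ω j.1) x)) := by
  have hF : ∀ β x, DifferentiableAt ℂ (F β) x := fun β x =>
    (hFA (β, x) trivial).differentiableAt.comp x
      ((differentiableAt_const β).prodMk differentiableAt_id)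
  refine ⟨fun ⟨gg1, _⟩ => ⟨fun β x k hk => ?_, fun β x k => ?_⟩,
    fun ⟨r1, r2⟩ => ⟨fun β a ha k => ?_, fun β a ha => ?_⟩⟩
  · have ha := extendOne_mem_slitPlane (I := I) x
    rw [← reducedVar_extendOne (l := fun j => c (-(ω j.1))) x]
    exact (fderiv_single_eq_iff_of_mem (hF β _) ha hk
      (mul_monomial_coord_sub_of_mem hind hc ha β hk) (F (β - ω k))).1 (gg1 β _ ha k)
  · have ha := extendOne_mem_slitPlane (I := I) x
    rw [← reducedVar_extendOne (l := fun j => c (-(ω j.1))) x]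
    exact (fderiv_single_eq_iff_of_notMem (hF β _) ha k
      (monomial_coord_sub hind hc ha β (ω k)) (F (β - ω k))).1 (gg1 β _ ha k)
  · by_cases hk : k ∈ I
    · exact (fderiv_single_eq_iff_of_mem (hF β _) ha hk
        (mul_monomial_coord_sub_of_mem hind hc ha β hk) (F (β - ω k))).2 (r1 β _ k hk)
    · exact (fderiv_single_eq_iff_of_notMem (l := fun j => c (-(ω j.1))) (hF β _) ha ⟨k, hk⟩
        (monomial_coord_sub hind hc ha β (ω k)) (F (β - ω k))).2 (r2 β _ ⟨k, hk⟩)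
  · exact sum_mul_fderiv_single_smul (hc β) (fun j => hc _) (hF β _) ha

/-- Proposition 1: let `I` be a base, `Ω = {a : a_i ∈ ℂ∖(−∞,0] for i ∈ I}` (principal branch
powers), `v(β,a) = ∏_{i∈I} a_i^{β_i}` and `x_j(a) = a_j ∏_{i∈I} a_i^{l^j_i}` for `j ∈ J`,
where `β = ∑_{i∈I} β_i ω^i` and `-ω^j = ∑_{i∈I} l^j_i ω^i`.  Then for an analytic function
`F(β,x)` on `V × ℂ^J`, the function `f(β,a) = v(β,a) F(β,x(a))` satisfies the GG-system
(GG1),(GG2) on `V × Ω` iff `F` satisfies the reduced GG-system (R1),(R2) associated with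
`A` and `I`. -/
theorem stmt8 {V : Type*} [NormedAddCommGroup V] [NormedSpace ℂ V] [FiniteDimensional ℂ V]
    {N : ℕ} (ω : Fin N → V)
    (hspan : Submodule.span ℂ (Set.range ω) = ⊤)
    (I : Finset (Fin N)) (hcard : I.card = Module.finrank ℂ V)
    (hind : LinearIndependent ℂ (fun i : I => ω i))
    (c : V → Fin N → ℂ) (hc : ∀ β : V, ∑ i ∈ I, c β i • ω i = β)
    (F : V → ({j : Fin N // j ∉ I} → ℂ) → ℂ)
    (hFA : AnalyticOnNhd ℂ (fun p : V × ({j : Fin N // j ∉ I} → ℂ) => F p.1 p.2) Set.univ) :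
    ((∀ (β : V) (a : Fin N → ℂ), (∀ i ∈ I, a i ∈ Complex.slitPlane) → ∀ (j : Fin N),
        fderiv ℂ (fun a' => (∏ i ∈ I, a' i ^ c β i) *
            F β (fun j' => a' j'.1 * ∏ i ∈ I, a' i ^ c (-(ω j'.1)) i)) a (Pi.single j 1)
          = (∏ i ∈ I, a i ^ c (β - ω j) i) *
            F (β - ω j) (fun j' => a j'.1 * ∏ i ∈ I, a i ^ c (-(ω j'.1)) i)) ∧
     (∀ (β : V) (a : Fin N → ℂ), (∀ i ∈ I, a i ∈ Complex.slitPlane) →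
        ∑ j, (a j * fderiv ℂ (fun a' => (∏ i ∈ I, a' i ^ c β i) *
            F β (fun j' => a' j'.1 * ∏ i ∈ I, a' i ^ c (-(ω j'.1)) i)) a (Pi.single j 1)) • ω j
          = ((∏ i ∈ I, a i ^ c β i) *
            F β (fun j' => a j'.1 * ∏ i ∈ I, a i ^ c (-(ω j'.1)) i)) • β))
    ↔
    ((∀ (β : V) (x : {j : Fin N // j ∉ I} → ℂ), ∀ i ∈ I,
        c β i * F β x +
          ∑ j : {j : Fin N // j ∉ I}, c (-(ω j.1)) i * x j * fderiv ℂ (F β) x (Pi.single j 1)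
          = F (β - ω i) x) ∧
     (∀ (β : V) (x : {j : Fin N // j ∉ I} → ℂ) (j : {j : Fin N // j ∉ I}),
        fderiv ℂ (F β) x (Pi.single j 1) = F (β - ω j.1) x)) :=
  stmt8_general ω I hind c hc F hFA
end

section
/- (Theorem 2) Let I be a base, let D ⊆ ℂ^J be an open neighborhood of 0, and let F(β,x) be an analytic function on V × D satisfying the reduced GG-system (R1), (R2) associated with A and I. Then there exists a function u : V → ℂ satisfying the periodicity conditions u(β − ω^i) = u(β) for all i ∈ I, such that for every β ∈ V and every multi-index m = (m_j)_{j∈J} ∈ ℤ_{≥0}^J, the m-th Taylor coefficient of x ↦ F(β,x) at x = 0 equals u(β − Σ_{j∈J} m_j ω^j) / (Γ_I(β − Σ_{j∈J} m_j ω^j + 1) · ∏_{j∈J} m_j!); that is, F(β,x) = Σ_m [u(β − Σ_j m_j ω^j)/Γ_I(β − Σ_j m_j ω^j + 1)] · x^m/m! on V × D. Here 1/Γ_I(·) denotes the product of reciprocal Gamma functions, which is entire. -/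
/-- The partial derivative of `g : ℂ^ι → ℂ` in the `j`-th coordinate direction. -/
noncomputable def pderivI {ι : Type*} [Fintype ι] [DecidableEq ι]
    (j : ι) (g : (ι → ℂ) → ℂ) : (ι → ℂ) → ℂ :=
  fun x => fderiv ℂ g x (Pi.single j 1)

/-- The iterated partial derivative `∏_j (∂/∂x_j)^(m j)`. -/
noncomputable def multiPD {ι : Type*} [Fintype ι] [DecidableEq ι] (m : ι → ℕ) :
    ((ι → ℂ) → ℂ) → ((ι → ℂ) → ℂ) :=
  Finset.univ.toList.foldr (fun j G => (pderivI j)^[m j] ∘ G) id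

/-!
At `x = 0`, (R2) gives `∂^m F(β, 0) = F(β - ∑ m_j ω^j, 0)` and (R1) gives
`g(β - ω^i) = β_i g(β)` for `g(β) = F(β, 0)`. The function `1 / Γ_I(β + 1)` satisfies the same
recursion, so the natural choice is `u = g · Γ_I(· + 1)`. Because of the poles of `Γ`, `u(β)` is
instead taken to be the value of `g(β + K𝟙) Γ_I(β + (K + 1)𝟙)`, `𝟙 = ∑_{i ∈ I} ω^i`, which is
independent of `K` once `K` is large; for such `K` no Gamma factor sits at a pole, which makes `u`
periodic and gives `g = u / Γ_I(· + 1)` via `Γ(z + K) = (z)_K Γ(z)`.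
-/

open Filter

namespace Complex

theorem eventually_add_natCast_ne_zero (z : ℂ) : ∀ᶠ n : ℕ in atTop, z + n ≠ 0 := by
  by_cases h : ∃ k : ℕ, z + k = 0
  · obtain ⟨k, hk⟩ := h
    filter_upwards [eventually_ne_atTop k] with n hn hzn
    exact hn (by exact_mod_cast (by linear_combination hzn - hk : (n : ℂ) = k))
  · exact Eventually.of_forall (not_exists.mp h)

/- `Gamma` vanishes at its poles, so `(Gamma z)⁻¹` is the entire function `1/Γ`; at a pole `z = -k`
the identity only holds once `n > k`, when the Pochhammer product has picked up its zero. -/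
theorem eventually_ascPochhammer_eval_eq_Gamma_mul_inv (z : ℂ) :
    ∀ᶠ n : ℕ in atTop, (ascPochhammer ℂ n).eval z = Gamma (z + n) * (Gamma z)⁻¹ := by
  by_cases hz : ∀ k : ℕ, z ≠ -k
  · exact Eventually.of_forall fun n => by rw [← div_eq_mul_inv, Gamma_add_nat_div_Gamma_eq z hz]
  · push Not at hz
    obtain ⟨k, rfl⟩ := hz
    filter_upwards [eventually_gt_atTop k] with n hn
    rw [ascPochhammer_eval_neg_coe_nat_of_lt hn, Gamma_neg_nat_eq_zero, inv_zero, mul_zero]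

end Complex

theorem LinearIndependent.exists_addMonoidHom_eq_coords {R M ι : Type*} [Ring R]
    [AddCommGroup M] [Module R M] [Fintype ι] [DecidableEq ι] {v : ι → M}
    (hv : LinearIndependent R v) {c : M → ι → R} (hc : ∀ β, ∑ i, c β i • v i = β) :
    ∃ t : M →+ ι → R, (∀ i, t (v i) = Pi.single i 1) ∧ ∀ β, t β = c β := by
  let b : Module.Basis ι R M := .mk hv fun β _ => hc β ▸ Submodule.sum_mem _ fun i _ =>
    Submodule.smul_mem _ _ (Submodule.subset_span ⟨i, rfl⟩)
  have hb : ∀ i, b i = v i := Module.Basis.mk_apply _ _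
  refine ⟨b.equivFun.toAddMonoidHom, fun i => ?_, fun β => ?_⟩
  · rw [← hb]
    exact (b.equivFun_apply _).trans (by rw [b.repr_self, Finsupp.single_eq_pi_single])
  · refine (b.equivFun.symm_apply_eq.1 ?_).symm
    simpa only [Module.Basis.equivFun_symm_apply, hb] using hc β

section PeriodicGammaFactor

variable {V ι : Type*} [AddCommGroup V]

noncomputable def gammaRenormalized [Fintype ι] (t : V →+ ι → ℂ) (e : ι → V) (g : V → ℂ)
    (β : V) (K : ℕ) : ℂ :=
  g (β + K • ∑ i, e i) * ∏ i, Complex.Gamma (t β i + K + 1)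

variable {t : V →+ ι → ℂ} {e : ι → V} {g : V → ℂ} [DecidableEq ι]

theorem apply_sub_sum (he : ∀ i, t (e i) = Pi.single i 1)
    (hg : ∀ β i, g (β - e i) = t β i * g β) (β : V) (S : Finset ι) :
    g (β - ∑ i ∈ S, e i) = (∏ i ∈ S, t β i) * g β := by
  induction S using Finset.induction_on with
  | empty => simp
  | insert a S ha ih =>
    have hta : t (β - ∑ i ∈ S, e i) a = t β a := by
      simp [he, Pi.single_apply, ha]
    rw [Finset.sum_insert ha, add_comm, ← sub_sub, hg, hta, ih, Finset.prod_insert ha, mul_assoc]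

variable [Fintype ι]

theorem map_sum_eq_one (he : ∀ i, t (e i) = Pi.single i 1) : t (∑ i, e i) = 1 := by
  simp only [map_sum, he, Finset.univ_sum_single]; rfl

theorem apply_add_nsmul_sum (he : ∀ i, t (e i) = Pi.single i 1) (β : V) (K : ℕ) (i : ι) :
    t (β + K • ∑ i, e i) i = t β i + K := by
  simp [map_sum_eq_one he]

theorem apply_eq_prod_mul_apply_add_sum (he : ∀ i, t (e i) = Pi.single i 1)
    (hg : ∀ β i, g (β - e i) = t β i * g β) (β : V) :
    g β = (∏ i, (t β i + 1)) * g (β + ∑ i, e i) := by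
  simpa [map_sum_eq_one he] using apply_sub_sum he hg (β + ∑ i, e i) Finset.univ

theorem apply_eq_prod_ascPochhammer_mul (he : ∀ i, t (e i) = Pi.single i 1)
    (hg : ∀ β i, g (β - e i) = t β i * g β) (β : V) (K : ℕ) :
    g β = (∏ i, (ascPochhammer ℂ K).eval (t β i + 1)) * g (β + K • ∑ i, e i) := by
  induction K with
  | zero => simp
  | succ K ih =>
    rw [ih, apply_eq_prod_mul_apply_add_sum he hg, add_assoc, ← succ_nsmul]
    simp only [apply_add_nsmul_sum he, ascPochhammer_succ_eval, Finset.prod_mul_distrib,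
      add_right_comm _ (1 : ℂ) (K : ℂ)]
    ring

theorem eventually_gammaRenormalized_succ (he : ∀ i, t (e i) = Pi.single i 1)
    (hg : ∀ β i, g (β - e i) = t β i * g β) (β : V) :
    ∀ᶠ K in atTop, gammaRenormalized t e g β (K + 1) = gammaRenormalized t e g β K := by
  filter_upwards [eventually_all.2 fun i => Complex.eventually_add_natCast_ne_zero (t β i + 1)]
    with K hK
  have hΓ : ∀ i, Complex.Gamma (t β i + (K + 1 : ℕ) + 1)
      = (t β i + K + 1) * Complex.Gamma (t β i + K + 1) := fun i => by
    rw [← Complex.Gamma_add_one _ (by simpa [add_right_comm] using hK i)]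
    push_cast; ring_nf
  simp only [gammaRenormalized, hΓ, Finset.prod_mul_distrib]
  rw [apply_eq_prod_mul_apply_add_sum he hg (β + K • ∑ i, e i), add_assoc, ← succ_nsmul]
  simp only [apply_add_nsmul_sum he]
  ring

theorem eventually_gammaRenormalized_sub (he : ∀ i, t (e i) = Pi.single i 1)
    (hg : ∀ β i, g (β - e i) = t β i * g β) (β : V) (i : ι) :
    ∀ᶠ K in atTop, gammaRenormalized t e g (β - e i) K = gammaRenormalized t e g β K := by
  filter_upwards [Complex.eventually_add_natCast_ne_zero (t β i)] with K hK
  have hΓ : ∀ a, Complex.Gamma (t β a + K + 1)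
      = (if a = i then t β i + K else 1) * Complex.Gamma (t (β - e i) a + K + 1) := fun a => by
    by_cases ha : a = i
    · subst ha
      rw [if_pos rfl, map_sub, Pi.sub_apply, he, Pi.single_eq_same,
        show t β a - 1 + K + 1 = t β a + K by ring, Complex.Gamma_add_one _ hK]
    · simp [he, ha]
  simp only [gammaRenormalized]
  rw [sub_add_eq_add_sub, hg, apply_add_nsmul_sum he]
  simp only [hΓ, Finset.prod_mul_distrib, Finset.prod_ite_eq', Finset.mem_univ, if_true]
  ring

theorem eventually_apply_eq_gammaRenormalized_mul (he : ∀ i, t (e i) = Pi.single i 1)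
    (hg : ∀ β i, g (β - e i) = t β i * g β) (β : V) :
    ∀ᶠ K in atTop,
      g β = gammaRenormalized t e g β K * ∏ i, (Complex.Gamma (t β i + 1))⁻¹ := by
  filter_upwards [eventually_all.2 fun i =>
    Complex.eventually_ascPochhammer_eval_eq_Gamma_mul_inv (t β i + 1)] with K hK
  rw [apply_eq_prod_ascPochhammer_mul he hg β K, gammaRenormalized]
  simp only [hK, Finset.prod_mul_distrib, add_right_comm _ (1 : ℂ)]
  ring

theorem exists_periodic_eq_mul_prod_inv_Gamma (he : ∀ i, t (e i) = Pi.single i 1)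
    (hg : ∀ β i, g (β - e i) = t β i * g β) :
    ∃ u : V → ℂ, (∀ β i, u (β - e i) = u β) ∧
      ∀ β, g β = u β * ∏ i, (Complex.Gamma (t β i + 1))⁻¹ := by
  have hconst : ∀ β, ∃ v, ∀ᶠ K in atTop, gammaRenormalized t e g β K = v := fun β =>
    eventuallyConst_iff_exists_eventuallyEq.1 <| eventuallyConst_atTop_nat.2 <|
      eventually_atTop.1 (eventually_gammaRenormalized_succ he hg β)
  choose u hu using hconst
  refine ⟨u, fun β i => ?_, fun β => ?_⟩
  · obtain ⟨K, h₁, h₂, h₃⟩ :=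
      ((hu (β - e i)).and ((hu β).and (eventually_gammaRenormalized_sub he hg β i))).exists
    rw [← h₁, ← h₂, h₃]
  · obtain ⟨K, h₁, h₂⟩ := ((hu β).and (eventually_apply_eq_gammaRenormalized_mul he hg β)).exists
    rw [h₂, h₁]

end PeriodicGammaFactor

section IteratedPartialDerivatives

variable {ι V : Type*} [Fintype ι] [DecidableEq ι] [AddCommGroup V]
  {D : Set (ι → ℂ)} {F : V → (ι → ℂ) → ℂ}

theorem Set.EqOn.pderivI (hD : IsOpen D) {g h : (ι → ℂ) → ℂ} (hgh : Set.EqOn g h D) (j : ι) :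
    Set.EqOn (pderivI j g) (pderivI j h) D := fun x hx => by
  simp only [_root_.pderivI, (hgh.eventuallyEq_of_mem (hD.mem_nhds hx)).fderiv_eq]

theorem eqOn_iterate_pderivI (hD : IsOpen D) {j : ι} {w : V}
    (hF : ∀ β, Set.EqOn (pderivI j (F β)) (F (β - w)) D) (k : ℕ) {β : V}
    {g : (ι → ℂ) → ℂ} (hg : Set.EqOn g (F β) D) :
    Set.EqOn ((pderivI j)^[k] g) (F (β - k • w)) D := by
  induction k with
  | zero => simpa using hg
  | succ k ih =>
    rw [Function.iterate_succ', succ_nsmul, ← sub_sub]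
    exact ((ih.pderivI hD j).trans (hF _) :)

theorem eqOn_multiPD (hD : IsOpen D) {w : ι → V}
    (hF : ∀ j β, Set.EqOn (pderivI j (F β)) (F (β - w j)) D) (m : ι → ℕ) (β : V) :
    Set.EqOn (multiPD m (F β)) (F (β - ∑ j, m j • w j)) D := by
  suffices ∀ l : List ι, Set.EqOn (l.foldr (fun j G => (pderivI j)^[m j] ∘ G) id (F β))
      (F (β - (l.map fun j => m j • w j).sum)) D by
    simpa only [multiPD, Finset.sum_map_toList] using this Finset.univ.toList
  intro l
  induction l with
  | nil => simpa using Set.eqOn_refl _ _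
  | cons j l ih =>
    rw [List.map_cons, List.sum_cons, add_comm, ← sub_sub]
    exact eqOn_iterate_pderivI hD (hF j) (m j) ih

end IteratedPartialDerivatives

theorem stmt9_general {V : Type*} [NormedAddCommGroup V] [NormedSpace ℂ V]
    {N : ℕ} (ω : Fin N → V)
    (I : Finset (Fin N))
    (hind : LinearIndependent ℂ (fun i : I => ω i))
    (c : V → Fin N → ℂ) (hc : ∀ β : V, ∑ i ∈ I, c β i • ω i = β)
    (D : Set ({j : Fin N // j ∉ I} → ℂ)) (hDopen : IsOpen D) (hD0 : (0 : _) ∈ D)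
    (F : V → ({j : Fin N // j ∉ I} → ℂ) → ℂ)
    (hR1 : ∀ (β : V), ∀ x ∈ D, ∀ i ∈ I,
      c β i * F β x +
        ∑ j : {j : Fin N // j ∉ I}, c (-(ω j.1)) i * x j * fderiv ℂ (F β) x (Pi.single j 1)
        = F (β - ω i) x)
    (hR2 : ∀ (β : V), ∀ x ∈ D, ∀ j : {j : Fin N // j ∉ I},
      fderiv ℂ (F β) x (Pi.single j 1) = F (β - ω j.1) x) :
    ∃ u : V → ℂ, (∀ β : V, ∀ i ∈ I, u (β - ω i) = u β) ∧
      ∀ (β : V) (m : {j : Fin N // j ∉ I} → ℕ),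
        multiPD m (F β) 0 =
          u (β - ∑ j : {j : Fin N // j ∉ I}, (m j : ℂ) • ω j.1) *
            ∏ i ∈ I, (Complex.Gamma
              (c (β - (∑ j : {j : Fin N // j ∉ I}, (m j : ℂ) • ω j.1) + ∑ i' ∈ I, ω i') i))⁻¹ := by
  classical
  obtain ⟨t, he, htc⟩ := hind.exists_addMonoidHom_eq_coords (c := fun β (i : I) => c β i)
    fun β => (Finset.sum_coe_sort I fun i => c β i • ω i).trans (hc β)
  have hct : ∀ β (i : I), c β i = t β i := fun β i => (congrFun (htc β) i).symm
  have hg : ∀ β (i : I), F (β - ω i) 0 = t β i * F β 0 := fun β i => by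
    simpa [hct] using (hR1 β 0 hD0 i i.2).symm
  obtain ⟨u, hu_periodic, hu⟩ :=
    exists_periodic_eq_mul_prod_inv_Gamma (g := fun β => F β 0) he hg
  refine ⟨u, fun β i hi => hu_periodic β ⟨i, hi⟩, fun β m => ?_⟩
  rw [eqOn_multiPD hDopen (fun j β x hx => hR2 β x hx j) m β hD0]
  have hσ : t (∑ i ∈ I, ω i) = 1 := by
    rw [← Finset.sum_coe_sort]
    exact map_sum_eq_one he
  simp only [Nat.cast_smul_eq_nsmul, ← Finset.prod_coe_sort I, hct, map_add, hσ,
    Pi.add_apply, Pi.one_apply]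
  exact hu _

/-- Theorem 2: any analytic solution `F(β,x)` on `V × D` (`D` a neighborhood of `x = 0`)
of the reduced GG-system (R1),(R2) associated with `A` and a base `I` has Taylor
coefficients at `x = 0` of the form `u(β - ∑_j m_j ω^j)/(Γ_I(β - ∑_j m_j ω^j + 1) m!)`,
i.e. `(∏_j (∂/∂x_j)^{m_j} F)(β,0) = u(β - ∑_j m_j ω^j) ∏_{i∈I} Γ(coord_i + 1)⁻¹`, for some
function `u : V → ℂ` with `u(β - ω^i) = u(β)` for all `i ∈ I`. -/
theorem stmt9 {V : Type*} [NormedAddCommGroup V] [NormedSpace ℂ V] [FiniteDimensional ℂ V]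
    {N : ℕ} (ω : Fin N → V)
    (hspan : Submodule.span ℂ (Set.range ω) = ⊤)
    (I : Finset (Fin N)) (hcard : I.card = Module.finrank ℂ V)
    (hind : LinearIndependent ℂ (fun i : I => ω i))
    (c : V → Fin N → ℂ) (hc : ∀ β : V, ∑ i ∈ I, c β i • ω i = β)
    (D : Set ({j : Fin N // j ∉ I} → ℂ)) (hDopen : IsOpen D) (hD0 : (0 : _) ∈ D)
    (F : V → ({j : Fin N // j ∉ I} → ℂ) → ℂ)
    (hFA : AnalyticOnNhd ℂ (fun p : V × ({j : Fin N // j ∉ I} → ℂ) => F p.1 p.2)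
      (Set.univ ×ˢ D))
    (hR1 : ∀ (β : V), ∀ x ∈ D, ∀ i ∈ I,
      c β i * F β x +
        ∑ j : {j : Fin N // j ∉ I}, c (-(ω j.1)) i * x j * fderiv ℂ (F β) x (Pi.single j 1)
        = F (β - ω i) x)
    (hR2 : ∀ (β : V), ∀ x ∈ D, ∀ j : {j : Fin N // j ∉ I},
      fderiv ℂ (F β) x (Pi.single j 1) = F (β - ω j.1) x) :
    ∃ u : V → ℂ, (∀ β : V, ∀ i ∈ I, u (β - ω i) = u β) ∧
      ∀ (β : V) (m : {j : Fin N // j ∉ I} → ℕ),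
        multiPD m (F β) 0 =
          u (β - ∑ j : {j : Fin N // j ∉ I}, (m j : ℂ) • ω j.1) *
            ∏ i ∈ I, (Complex.Gamma
              (c (β - (∑ j : {j : Fin N // j ∉ I}, (m j : ℂ) • ω j.1) + ∑ i' ∈ I, ω i') i))⁻¹ :=
  stmt9_general ω I hind c hc D hDopen hD0 F hR1 hR2
end

section
/- (Corollary to Theorem 2) Let I be a base and let D ⊆ ℂ^J be a connected open neighborhood of 0. If F¹(β,x) and F²(β,x) are two analytic solutions on V × D of the reduced GG-system (R1), (R2) associated with A and I, and F¹(β,0) = F²(β,0) for all β ∈ V, then F¹ = F² on V × D. In other words, a solution regular in a neighborhood of x = 0 is uniquely determined by the initial term of its power series expansion in powers of x. -/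
/-!
The difference `G β = F¹(β, ·) - F²(β, ·)` solves the same linear system
`∂G β/∂x_j = G (β - ω^j)` and vanishes at `x = 0` for every `β`. Along a complex line
`t ↦ t • x` this says `g_β' = ∑ x_j g_{β - ω^j}`, so by induction every derivative of every
`g_β` vanishes at `0`, and the Cauchy–Taylor expansion gives `g_β = 0` on a disc containing
`t = 1`. Hence `G β` vanishes near `0`, and the identity theorem on the connected set `D` finishes.
-/

open Filter Set Topology Metric

section LinearSystem

variable {ι κ : Type*} [Fintype κ] (σ : κ → ι → ι)

theorem iteratedDeriv_eq_zero_of_deriv_eq_sum {g : ι → ℂ → ℂ} (a : κ → ℂ) {r : ℝ} (hr : 0 < r)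
    (hg : ∀ i, DifferentiableOn ℂ (g i) (ball 0 r))
    (hderiv : ∀ i, ∀ t ∈ ball 0 r, deriv (g i) t = ∑ k, a k * g (σ k i) t)
    (h0 : ∀ i, g i 0 = 0) (n : ℕ) (i : ι) : iteratedDeriv n (g i) 0 = 0 := by
  induction n generalizing i with
  | zero => rw [iteratedDeriv_zero]; exact h0 i
  | succ n ih =>
    have hball : ball (0 : ℂ) r ∈ 𝓝 0 := ball_mem_nhds 0 hr
    have hderiv_near : deriv (g i) =ᶠ[𝓝 0] fun t => ∑ k, a k * g (σ k i) t :=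
      eventually_of_mem hball (hderiv i)
    have hsmooth : ∀ k ∈ Finset.univ, ContDiffAt ℂ n (fun t => a k * g (σ k i) t) 0 := fun k _ =>
      contDiffAt_const.mul (((hg (σ k i)).contDiffOn isOpen_ball).contDiffAt hball)
    rw [iteratedDeriv_succ', hderiv_near.iteratedDeriv_eq, iteratedDeriv_fun_sum hsmooth]
    simp only [iteratedDeriv_const_mul_field, ih, mul_zero, Finset.sum_const_zero]

theorem eqOn_zero_of_deriv_eq_sum {g : ι → ℂ → ℂ} (a : κ → ℂ) {r : ℝ}
    (hg : ∀ i, DifferentiableOn ℂ (g i) (ball 0 r))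
    (hderiv : ∀ i, ∀ t ∈ ball 0 r, deriv (g i) t = ∑ k, a k * g (σ k i) t)
    (h0 : ∀ i, g i 0 = 0) (i : ι) : EqOn (g i) 0 (ball 0 r) := by
  intro z hz
  have hcoeff := iteratedDeriv_eq_zero_of_deriv_eq_sum σ a (pos_of_mem_ball hz) hg hderiv h0
  have htaylor := Complex.hasSum_taylorSeries_on_ball (hg i) hz
  simp only [hcoeff, smul_zero] at htaylor
  exact htaylor.unique hasSum_zero

theorem ContinuousLinearMap.apply_eq_sum_single {F : Type*} [NormedAddCommGroup F]
    [NormedSpace ℂ F] [DecidableEq κ] (L : (κ → ℂ) →L[ℂ] F) (x : κ → ℂ) :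
    L x = ∑ k, x k • L (Pi.single k 1) := by
  conv_lhs => rw [pi_eq_sum_univ' x]
  simp only [map_sum, map_smul]

theorem eventuallyEq_zero_of_fderiv_single_eq [DecidableEq κ] {G : ι → (κ → ℂ) → ℂ}
    {U : Set (κ → ℂ)} (hU : U ∈ 𝓝 0) (hG : ∀ i, DifferentiableOn ℂ (G i) U)
    (hderiv : ∀ i, ∀ y ∈ U, ∀ k, fderiv ℂ (G i) y (Pi.single k 1) = G (σ k i) y)
    (h0 : ∀ i, G i 0 = 0) (i : ι) : G i =ᶠ[𝓝 0] 0 := by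
  obtain ⟨r, hr, hrU⟩ := Metric.mem_nhds_iff.mp hU
  filter_upwards [ball_mem_nhds 0 (half_pos hr)] with x hx
  have hline : ∀ t ∈ ball (0 : ℂ) 2, t • x ∈ ball 0 r := fun t ht => by
    rw [mem_ball_zero_iff] at ht hx ⊢
    calc ‖t • x‖ = ‖t‖ * ‖x‖ := norm_smul t x
      _ < 2 * (r / 2) := mul_lt_mul'' ht hx (norm_nonneg _) (norm_nonneg _)
      _ = r := by ring
  have hdiff : ∀ i, ∀ t ∈ ball (0 : ℂ) 2, DifferentiableAt ℂ (G i) (t • x) := fun i t ht =>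
    (hG i).differentiableAt (mem_of_superset (isOpen_ball.mem_nhds (hline t ht)) hrU)
  have hchain : ∀ i, ∀ t ∈ ball (0 : ℂ) 2,
      deriv (fun s : ℂ => G i (s • x)) t = ∑ k, x k * G (σ k i) (t • x) := fun i t ht => by
    have hsmul : HasDerivAt (fun s : ℂ => s • x) x t := by
      simpa using (hasDerivAt_id t).smul_const x
    change deriv (G i ∘ fun s : ℂ => s • x) t = _
    rw [((hdiff i t ht).hasFDerivAt.comp_hasDerivAt t hsmul).deriv,
      ContinuousLinearMap.apply_eq_sum_single]
    simp only [hderiv i _ (hrU (hline t ht)), smul_eq_mul]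
  have hline_diff : ∀ i, DifferentiableOn ℂ (fun s : ℂ => G i (s • x)) (ball 0 2) :=
    fun i t ht => ((hdiff i t ht).comp t (differentiableAt_id.smul_const x)).differentiableWithinAt
  have hzero := eqOn_zero_of_deriv_eq_sum σ x hline_diff hchain (fun i => by simpa using h0 i) i
    (show (1 : ℂ) ∈ ball 0 2 by simp)
  simpa using hzero

end LinearSystem

theorem stmt10_general {V : Type*} [NormedAddCommGroup V] [NormedSpace ℂ V]
    {N : ℕ} (ω : Fin N → V)
    (I : Finset (Fin N))
    (D : Set ({j : Fin N // j ∉ I} → ℂ)) (hDopen : IsOpen D) (hDconn : IsConnected D)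
    (hD0 : (0 : _) ∈ D)
    (F1 F2 : V → ({j : Fin N // j ∉ I} → ℂ) → ℂ)
    (hF1A : AnalyticOnNhd ℂ (fun p : V × ({j : Fin N // j ∉ I} → ℂ) => F1 p.1 p.2)
      (Set.univ ×ˢ D))
    (hF2A : AnalyticOnNhd ℂ (fun p : V × ({j : Fin N // j ∉ I} → ℂ) => F2 p.1 p.2)
      (Set.univ ×ˢ D))
    (hR2₁ : ∀ (β : V), ∀ x ∈ D, ∀ j : {j : Fin N // j ∉ I},
      fderiv ℂ (F1 β) x (Pi.single j 1) = F1 (β - ω j.1) x)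
    (hR2₂ : ∀ (β : V), ∀ x ∈ D, ∀ j : {j : Fin N // j ∉ I},
      fderiv ℂ (F2 β) x (Pi.single j 1) = F2 (β - ω j.1) x)
    (h0 : ∀ β : V, F1 β 0 = F2 β 0) :
    ∀ (β : V), ∀ x ∈ D, F1 β x = F2 β x := by
  have h1 : ∀ β, AnalyticOnNhd ℂ (F1 β) D := fun β y hy => hF1A.curry_right y ⟨trivial, hy⟩
  have h2 : ∀ β, AnalyticOnNhd ℂ (F2 β) D := fun β y hy => hF2A.curry_right y ⟨trivial, hy⟩
  have hdiff : ∀ β, DifferentiableOn ℂ (F1 β - F2 β) D := fun β =>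
    ((h1 β).sub (h2 β)).differentiableOn
  have hderiv : ∀ β, ∀ y ∈ D, ∀ j : {j : Fin N // j ∉ I},
      fderiv ℂ (F1 β - F2 β) y (Pi.single j 1) = (F1 (β - ω j.1) - F2 (β - ω j.1)) y := by
    intro β y hy j
    rw [fderiv_sub ((h1 β y hy).differentiableAt) ((h2 β y hy).differentiableAt),
      sub_apply, hR2₁ β y hy j, hR2₂ β y hy j, Pi.sub_apply]
  have hnear : ∀ β, F1 β - F2 β =ᶠ[𝓝 0] 0 :=
    eventuallyEq_zero_of_fderiv_single_eq (fun j β => β - ω j.1) (hDopen.mem_nhds hD0) hdiff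
      hderiv (fun β => sub_eq_zero.mpr (h0 β))
  intro β x hx
  refine (h1 β).eqOn_of_preconnected_of_eventuallyEq (h2 β) hDconn.isPreconnected hD0 ?_ hx
  filter_upwards [hnear β] with y hy
  exact sub_eq_zero.mp hy

/-- Corollary to Theorem 2: two analytic solutions of the reduced GG-system (R1),(R2)
associated with `A` and a base `I`, on `V × D` with `D` a connected open neighborhood of
`x = 0`, that agree at `x = 0` for every `β`, agree on all of `V × D`. -/
theorem stmt10 {V : Type*} [NormedAddCommGroup V] [NormedSpace ℂ V] [FiniteDimensional ℂ V]
    {N : ℕ} (ω : Fin N → V)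
    (hspan : Submodule.span ℂ (Set.range ω) = ⊤)
    (I : Finset (Fin N)) (hcard : I.card = Module.finrank ℂ V)
    (hind : LinearIndependent ℂ (fun i : I => ω i))
    (c : V → Fin N → ℂ) (hc : ∀ β : V, ∑ i ∈ I, c β i • ω i = β)
    (D : Set ({j : Fin N // j ∉ I} → ℂ)) (hDopen : IsOpen D) (hDconn : IsConnected D)
    (hD0 : (0 : _) ∈ D)
    (F1 F2 : V → ({j : Fin N // j ∉ I} → ℂ) → ℂ)
    (hF1A : AnalyticOnNhd ℂ (fun p : V × ({j : Fin N // j ∉ I} → ℂ) => F1 p.1 p.2)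
      (Set.univ ×ˢ D))
    (hF2A : AnalyticOnNhd ℂ (fun p : V × ({j : Fin N // j ∉ I} → ℂ) => F2 p.1 p.2)
      (Set.univ ×ˢ D))
    (hR1₁ : ∀ (β : V), ∀ x ∈ D, ∀ i ∈ I,
      c β i * F1 β x +
        ∑ j : {j : Fin N // j ∉ I}, c (-(ω j.1)) i * x j * fderiv ℂ (F1 β) x (Pi.single j 1)
        = F1 (β - ω i) x)
    (hR2₁ : ∀ (β : V), ∀ x ∈ D, ∀ j : {j : Fin N // j ∉ I},
      fderiv ℂ (F1 β) x (Pi.single j 1) = F1 (β - ω j.1) x)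
    (hR1₂ : ∀ (β : V), ∀ x ∈ D, ∀ i ∈ I,
      c β i * F2 β x +
        ∑ j : {j : Fin N // j ∉ I}, c (-(ω j.1)) i * x j * fderiv ℂ (F2 β) x (Pi.single j 1)
        = F2 (β - ω i) x)
    (hR2₂ : ∀ (β : V), ∀ x ∈ D, ∀ j : {j : Fin N // j ∉ I},
      fderiv ℂ (F2 β) x (Pi.single j 1) = F2 (β - ω j.1) x)
    (h0 : ∀ β : V, F1 β 0 = F2 β 0) :
    ∀ (β : V), ∀ x ∈ D, F1 β x = F2 β x :=
  stmt10_general ω I D hDopen hDconn hD0 F1 F2 hF1A hF2A hR2₁ hR2₂ h0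
end

section
/- (§6.1) Let A be a finite set of nonzero vectors spanning a complex vector space V. For v ∈ V put A_v = {ω ∈ A : ω + v ∈ A ∪ {0}}, B_v = A ∖ A_v, and let L_v be the linear span of B_v; call v consistent with A if L_v is a proper subspace of V. Then for every nonzero vector v that is consistent with A: (i) L_v has codimension 1 in V; (ii) v ∉ A; (iii) v ∉ L_v; and (iv) A_v ∩ L_v = ∅. -/
/-!
Follow `ω ∈ A` along the line `ω, ω + v, ω + 2v, …` up to the last point still in `A`.
That point either lies in `B_v`, or it lies in `A_v` and the next point of the line is `0`.
Hence `A ⊆ L_v + ℂv`, so `L_v + ℂv = V`; consistency then forces `v ∉ L_v`, i.e. `L_v` is a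
hyperplane complementary to `ℂv`. If `v ∈ A`, or if some `ω ∈ A_v` lay in `L_v`, the same
line argument would put a nonzero multiple of `v` into `L_v`.
-/

open Submodule

theorem Finset.exists_add_nsmul_mem_and_add_succ_nsmul_notMem {V : Type*} [AddCommGroup V]
    [IsAddTorsionFree V] {A : Finset V} {ω v : V} (hω : ω ∈ A) (hv : v ≠ 0) :
    ∃ k : ℕ, ω + k • v ∈ A ∧ ω + (k + 1) • v ∉ A := by
  have hfin : {k : ℕ | ω + k • v ∈ A}.Finite :=
    A.finite_toSet.preimage fun a _ b _ hab => Nat.cast_injective <|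
      smul_left_injective ℤ hv (by simpa only [natCast_zsmul] using add_left_cancel hab)
  obtain ⟨k, hk, hmax⟩ := hfin.exists_maximalFor id _ ⟨0, by simpa using hω⟩
  exact ⟨k, hk, fun hk1 => by simpa using hmax hk1 k.le_succ⟩

namespace Submodule

variable {K V : Type*} [DivisionRing K] [AddCommGroup V] [Module K V]

theorem ne_zero_of_notMem {p : Submodule K V} {v : V} (hv : v ∉ p) : v ≠ 0 :=
  fun h => hv (h ▸ p.zero_mem)

theorem finrank_quotient_eq_one {p : Submodule K V} {v : V}
    (hsup : p ⊔ K ∙ v = ⊤) (hv : v ∉ p) : Module.finrank K (V ⧸ p) = 1 := by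
  have hcompl : IsCompl p (K ∙ v) :=
    ⟨(disjoint_span_singleton' (ne_zero_of_notMem hv)).2 hv, codisjoint_iff.2 hsup⟩
  rw [(p.quotientEquivOfIsCompl _ hcompl).finrank_eq, finrank_span_singleton (ne_zero_of_notMem hv)]

theorem nsmul_mem_iff [CharZero K] (p : Submodule K V) {n : ℕ} (hn : n ≠ 0) {x : V} :
    n • x ∈ p ↔ x ∈ p := by
  rw [← Nat.cast_smul_eq_nsmul K, p.smul_mem_iff (Nat.cast_ne_zero.2 hn)]

end Submodule

section Shift

variable {V : Type*} [AddCommGroup V] [DecidableEq V]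

/-- The set `A_v` of the paper. -/
def shiftIn (A : Finset V) (v : V) : Finset V :=
  A.filter fun ω => ω + v ∈ insert 0 A

/-- The set `B_v` of the paper. -/
def shiftOut (A : Finset V) (v : V) : Finset V :=
  A \ shiftIn A v

theorem exists_add_succ_nsmul_eq_zero_or_add_nsmul_mem_shiftOut [IsAddTorsionFree V]
    {A : Finset V} {ω v : V} (hω : ω ∈ A) (hv : v ≠ 0) :
    ∃ k : ℕ, ω + (k + 1) • v = 0 ∨ ω + k • v ∈ shiftOut A v := by
  obtain ⟨k, hk, hk1⟩ := A.exists_add_nsmul_mem_and_add_succ_nsmul_notMem hω hv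
  refine ⟨k, ?_⟩
  by_cases hin : ω + k • v ∈ shiftIn A v
  · rw [shiftIn, Finset.mem_filter, Finset.mem_insert, add_assoc, ← succ_nsmul] at hin
    exact .inl (hin.2.resolve_right hk1)
  · exact .inr (Finset.mem_sdiff.2 ⟨hk, hin⟩)

variable {K : Type*} [DivisionRing K] [CharZero K] [Module K V] {A : Finset V} {v : V}

theorem span_shiftOut_sup_span_singleton_eq_top (hspan : span K (A : Set V) = ⊤) (hv : v ≠ 0) :
    span K (shiftOut A v : Set V) ⊔ K ∙ v = ⊤ := by
  have := IsAddTorsionFree.of_isTorsionFree K V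
  rw [eq_top_iff, ← hspan, span_le]
  intro ω hω
  have hkv (k : ℕ) : k • v ∈ span K (shiftOut A v : Set V) ⊔ K ∙ v :=
    mem_sup_right (nsmul_mem (mem_span_singleton_self v) k)
  obtain ⟨k, h0 | hout⟩ := exists_add_succ_nsmul_eq_zero_or_add_nsmul_mem_shiftOut hω hv
  · rw [eq_neg_of_add_eq_zero_left h0]
    exact neg_mem (hkv _)
  · rw [← add_sub_cancel_right ω (k • v)]
    exact sub_mem (mem_sup_left (subset_span hout)) (hkv k)

theorem notMem_span_shiftOut (hspan : span K (A : Set V) = ⊤) (hv : v ≠ 0)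
    (hcons : span K (shiftOut A v : Set V) ≠ ⊤) : v ∉ span K (shiftOut A v : Set V) := by
  intro hvL
  apply hcons
  rw [← span_shiftOut_sup_span_singleton_eq_top hspan hv,
    sup_eq_left.2 ((span_singleton_le_iff_mem v _).2 hvL)]

theorem notMem_of_notMem_span_shiftOut (hvL : v ∉ span K (shiftOut A v : Set V)) : v ∉ A := by
  have := IsAddTorsionFree.of_isTorsionFree K V
  intro hvA
  obtain ⟨k, h0 | hout⟩ :=
    exists_add_succ_nsmul_eq_zero_or_add_nsmul_mem_shiftOut hvA (ne_zero_of_notMem hvL)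
  · rw [← succ_nsmul'] at h0
    exact ne_zero_of_notMem hvL ((nsmul_eq_zero_iff.1 h0).resolve_right (k + 1).succ_ne_zero)
  · rw [← succ_nsmul'] at hout
    exact hvL (((span K _).nsmul_mem_iff k.succ_ne_zero).1 (subset_span hout))

theorem notMem_span_shiftOut_of_mem_shiftIn (hvL : v ∉ span K (shiftOut A v : Set V))
    {ω : V} (hω : ω ∈ shiftIn A v) : ω ∉ span K (shiftOut A v : Set V) := by
  have := IsAddTorsionFree.of_isTorsionFree K V
  intro hωL
  obtain ⟨k, h0 | hout⟩ := exists_add_succ_nsmul_eq_zero_or_add_nsmul_mem_shiftOut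
    (Finset.mem_filter.1 hω).1 (ne_zero_of_notMem hvL)
  · rw [eq_neg_of_add_eq_zero_left h0] at hωL
    exact hvL (((span K _).nsmul_mem_iff k.succ_ne_zero).1 (neg_mem_iff.1 hωL))
  · have hk : k ≠ 0 := by
      rintro rfl
      simp only [zero_smul, add_zero, shiftOut, Finset.mem_sdiff] at hout
      exact hout.2 hω
    have hkv : k • v ∈ span K (shiftOut A v : Set V) := by
      simpa using sub_mem (subset_span hout) hωL
    exact hvL (((span K _).nsmul_mem_iff hk).1 hkv)

end Shift

theorem stmt16_general {V : Type*} [AddCommGroup V] [Module ℂ V] [DecidableEq V]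
    (A : Finset V)
    (hspan : Submodule.span ℂ (A : Set V) = ⊤)
    (v : V) (hv : v ≠ 0)
    (hcons : Submodule.span ℂ
      (((A \ A.filter (fun ω => ω + v ∈ insert (0 : V) A)) : Finset V) : Set V) ≠ ⊤) :
    Module.finrank ℂ
        (V ⧸ Submodule.span ℂ
          (((A \ A.filter (fun ω => ω + v ∈ insert (0 : V) A)) : Finset V) : Set V)) = 1 ∧
      v ∉ A ∧
      v ∉ Submodule.span ℂ
        (((A \ A.filter (fun ω => ω + v ∈ insert (0 : V) A)) : Finset V) : Set V) ∧
      ∀ ω ∈ A.filter (fun ω => ω + v ∈ insert (0 : V) A),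
        ω ∉ Submodule.span ℂ
          (((A \ A.filter (fun ω => ω + v ∈ insert (0 : V) A)) : Finset V) : Set V) := by
  have hvL : v ∉ span ℂ (shiftOut A v : Set V) := notMem_span_shiftOut hspan hv hcons
  exact ⟨finrank_quotient_eq_one (span_shiftOut_sup_span_singleton_eq_top hspan hv) hvL,
    notMem_of_notMem_span_shiftOut hvL, hvL,
    fun _ => notMem_span_shiftOut_of_mem_shiftIn hvL⟩

/-- §6.1: let `A` be a finite set of nonzero vectors spanning `V`, and for `v ∈ V` put
`A_v = {ω ∈ A : ω + v ∈ A ∪ {0}}`, `B_v = A ∖ A_v`, `L_v = span B_v`; `v` is consistent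
with `A` if `L_v ≠ V`.  Then for every nonzero consistent `v`: (i) `L_v` has codimension 1;
(ii) `v ∉ A`; (iii) `v ∉ L_v`; (iv) `A_v ∩ L_v = ∅`. -/
theorem stmt16 {V : Type*} [AddCommGroup V] [Module ℂ V] [DecidableEq V]
    (A : Finset V) (hA0 : ∀ ω ∈ A, ω ≠ (0 : V))
    (hspan : Submodule.span ℂ (A : Set V) = ⊤)
    (v : V) (hv : v ≠ 0)
    (hcons : Submodule.span ℂ
      (((A \ A.filter (fun ω => ω + v ∈ insert (0 : V) A)) : Finset V) : Set V) ≠ ⊤) :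
    Module.finrank ℂ
        (V ⧸ Submodule.span ℂ
          (((A \ A.filter (fun ω => ω + v ∈ insert (0 : V) A)) : Finset V) : Set V)) = 1 ∧
      v ∉ A ∧
      v ∉ Submodule.span ℂ
        (((A \ A.filter (fun ω => ω + v ∈ insert (0 : V) A)) : Finset V) : Set V) ∧
      ∀ ω ∈ A.filter (fun ω => ω + v ∈ insert (0 : V) A),
        ω ∉ Submodule.span ℂ
          (((A \ A.filter (fun ω => ω + v ∈ insert (0 : V) A)) : Finset V) : Set V) :=
  stmt16_general A hspan v hv hcons
end
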